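/- arXiv:2303.12387 — 7 statements merged into one kernel-verified Lean document; each statement's English description precedes it below -/
import Mathlib

section
/- Let M be a finite monoid and a, b ∈ M. The submonoid of M generated by a is isomorphic to the submonoid generated by b if and only if the threshold and period of a equal the threshold and period of b. -/
/-- `t` and `p` are the threshold and period of `x`: the least values with `p > 0`
and `x ^ (t + p) = x ^ t`. -/
def IsThresholdPeriod {M : Type*} [Monoid M] (x : M) (t p : ℕ) : Prop :=
  0 < p ∧ x ^ (t + p) = x ^ t ∧
    (∀ t' p' : ℕ, 0 < p' → x ^ (t' + p') = x ^ t' → t ≤ t') ∧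
    (∀ p' : ℕ, 0 < p' → x ^ (t + p') = x ^ t → p ≤ p')

section Aux

variable {M : Type*} [Monoid M] {x : M} {t p : ℕ}

private lemma pow_stab (h : x ^ (t + p) = x ^ t) {s : ℕ} (hs : t ≤ s) :
    x ^ (s + p) = x ^ s := by
  obtain ⟨r, rfl⟩ := Nat.exists_eq_add_of_le hs
  rw [show t + r + p = (t + p) + r by ring, pow_add, h, ← pow_add]

private lemma pow_add_mul (h : x ^ (t + p) = x ^ t) {s : ℕ} (hs : t ≤ s) (j : ℕ) :
    x ^ (s + j * p) = x ^ s := by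
  induction j with
  | zero => simp
  | succ j ih =>
      rw [show s + (j + 1) * p = s + j * p + p by ring,
        pow_stab h (hs.trans (Nat.le_add_right _ _)), ih]

private lemma pow_eq_of_cond (h : x ^ (t + p) = x ^ t) {m n : ℕ}
    (hm : t ≤ m) (hn : t ≤ n) (hmn : m % p = n % p) : x ^ m = x ^ n := by
  suffices H : ∀ m n : ℕ, t ≤ m → m ≤ n → m % p = n % p → x ^ m = x ^ n by
    rcases le_total m n with h1 | h1
    · exact H m n hm h1 hmn
    · exact (H n m hn h1 hmn.symm).symm
  intro m n hm hle hmn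
  obtain ⟨j, hj⟩ := (Nat.modEq_iff_dvd' hle).mp hmn
  have hn' : n = m + j * p := by
    calc n = (n - m) + m := (Nat.sub_add_cancel hle).symm
      _ = m + j * p := by rw [hj]; ring
  rw [hn']
  exact (pow_add_mul h hm j).symm

private lemma cond_of_pow_eq (hx : IsThresholdPeriod x t p) {m n : ℕ}
    (hmn : x ^ m = x ^ n) (hne : m ≠ n) :
    t ≤ m ∧ t ≤ n ∧ m % p = n % p := by
  obtain ⟨hp, heq, hmin_t, hmin_p⟩ := hx
  suffices H : ∀ m n : ℕ, m < n → x ^ m = x ^ n → t ≤ m ∧ m % p = n % p by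
    rcases lt_or_gt_of_ne hne with h1 | h1
    · obtain ⟨h2, h3⟩ := H m n h1 hmn
      exact ⟨h2, h2.trans h1.le, h3⟩
    · obtain ⟨h2, h3⟩ := H n m h1 hmn.symm
      exact ⟨h2.trans h1.le, h2, h3.symm⟩
  intro m n hlt he
  set d := n - m with hd_def
  have hd : 0 < d := by omega
  have htm : t ≤ m := by
    refine hmin_t m d hd ?_
    rw [show m + d = n by omega]
    exact he.symm
  obtain ⟨q, r, hqr, hr⟩ : ∃ q r : ℕ, d = q * p + r ∧ r < p :=
    ⟨d / p, d % p, by rw [Nat.mul_comm]; exact (Nat.div_add_mod d p).symm,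
      Nat.mod_lt _ hp⟩
  have hs1 : x ^ (t + m * p) = x ^ t := pow_add_mul heq le_rfl m
  have hsm : m ≤ t + m * p := (Nat.le_mul_of_pos_right m hp).trans (Nat.le_add_left _ _)
  have hs2 : x ^ (t + m * p + d) = x ^ (t + m * p) := by
    obtain ⟨w, hw⟩ : ∃ w, t + m * p = m + w := ⟨t + m * p - m, by omega⟩
    rw [hw, show m + w + d = n + w by omega, pow_add, pow_add, he]
  have hkey : x ^ (t + r) = x ^ t := by
    have e1 : x ^ (t + r) = x ^ (t + m * p + d) := by
      rw [hqr, show t + m * p + (q * p + r) = (t + r) + (m + q) * p from by ring]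
      exact (pow_add_mul heq (Nat.le_add_right t r) (m + q)).symm
    rw [e1, hs2, hs1]
  have hr0 : r = 0 := by
    by_contra hr0
    have := hmin_p r (Nat.pos_of_ne_zero hr0) hkey
    omega
  refine ⟨htm, ?_⟩
  have : n = m + q * p := by omega
  rw [this, Nat.add_mul_mod_self_right]

private lemma itp_unique {t' p' : ℕ} (h1 : IsThresholdPeriod x t p)
    (h2 : IsThresholdPeriod x t' p') : t = t' ∧ p = p' := by
  have ht : t = t' :=
    le_antisymm (h1.2.2.1 t' p' h2.1 h2.2.1) (h2.2.2.1 t p h1.1 h1.2.1)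
  subst ht
  exact ⟨rfl, le_antisymm (h1.2.2.2 p' h2.1 h2.2.1) (h2.2.2.2 p h1.1 h1.2.1)⟩

private lemma tp_eq {b c : M} {tb pb tc pc : ℕ} (k m : ℕ)
    (hb : IsThresholdPeriod b tb pb) (hc : IsThresholdPeriod c tc pc)
    (hk : b ^ k = c) (hm : c ^ m = b) : tb = tc ∧ pb = pc := by
  by_cases hb1 : b = 1
  · have hc1 : c = 1 := by rw [← hk, hb1, one_pow]
    have htb : tb = 0 := Nat.le_zero.mp (hb.2.2.1 0 1 one_pos (by simp [hb1]))
    have htc : tc = 0 := Nat.le_zero.mp (hc.2.2.1 0 1 one_pos (by simp [hc1]))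
    have hpb : pb = 1 := le_antisymm (by rw [htb] at hb; exact hb.2.2.2 1 one_pos (by simp [hb1])) hb.1
    have hpc : pc = 1 := le_antisymm (by rw [htc] at hc; exact hc.2.2.2 1 one_pos (by simp [hc1])) hc.1
    exact ⟨htb.trans htc.symm, hpb.trans hpc.symm⟩
  have hk0 : k ≠ 0 := by
    rintro rfl
    exact hb1 (by rw [← hm, ← hk, pow_zero, one_pow])
  have hm0 : m ≠ 0 := by
    rintro rfl
    exact hb1 (by rw [← hm, pow_zero])
  -- case tb = 0
  by_cases htb0 : tb = 0
  · subst htb0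
    have h1 : c ^ (0 + pb) = c ^ 0 := by
      rw [← hk, ← pow_mul, ← pow_mul]
      exact pow_eq_of_cond hb.2.1 (Nat.zero_le _) (Nat.zero_le _)
        (by simp [Nat.mul_mod_left])
    have htc : tc = 0 := Nat.le_zero.mp (hc.2.2.1 0 pb hb.1 h1)
    subst htc
    have hpc_le : pc ≤ pb := hc.2.2.2 pb hb.1 h1
    have h2 : b ^ (0 + pc) = b ^ 0 := by
      rw [← hm, ← pow_mul, ← pow_mul]
      exact pow_eq_of_cond hc.2.1 (Nat.zero_le _) (Nat.zero_le _)
        (by simp [Nat.mul_mod_left])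
    exact ⟨rfl, le_antisymm (hb.2.2.2 pc hc.1 h2) hpc_le⟩
  by_cases htc0 : tc = 0
  · exfalso
    subst htc0
    have h2 : b ^ (0 + pc) = b ^ 0 := by
      rw [← hm, ← pow_mul, ← pow_mul]
      exact pow_eq_of_cond hc.2.1 (Nat.zero_le _) (Nat.zero_le _)
        (by simp [Nat.mul_mod_left])
    exact htb0 (Nat.le_zero.mp (hb.2.2.1 0 pc hc.1 h2))
  -- now tb ≥ 1, tc ≥ 1
  have hbkm : b ^ (k * m) = b ^ 1 := by rw [pow_mul, hk, hm, pow_one]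
  by_cases hkm1 : k * m = 1
  · have hk1 : k = 1 := Nat.eq_one_of_mul_eq_one_right hkm1
    have : c = b := by rw [← hk, hk1, pow_one]
    subst this
    exact (itp_unique hb hc).imp id id
  have htb1 : tb = 1 := by
    obtain ⟨_, h2, _⟩ := cond_of_pow_eq hb hbkm hkm1
    omega
  have hckm : c ^ (m * k) = c ^ 1 := by rw [pow_mul, hm, hk, pow_one]
  have htc1 : tc = 1 := by
    obtain ⟨_, h2, _⟩ := cond_of_pow_eq hc hckm (by rwa [Nat.mul_comm])
    omega
  subst htb1; subst htc1
  have h1 : c ^ (1 + pb) = c ^ 1 := by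
    rw [← hk, ← pow_mul, ← pow_mul]
    refine pow_eq_of_cond hb.2.1 ?_ ?_ ?_
    · exact Nat.one_le_iff_ne_zero.mpr (by positivity)
    · omega
    · rw [show k * (1 + pb) = k * 1 + k * pb from by ring, Nat.add_mul_mod_self_right]
  have h2 : b ^ (1 + pc) = b ^ 1 := by
    rw [← hm, ← pow_mul, ← pow_mul]
    refine pow_eq_of_cond hc.2.1 ?_ ?_ ?_
    · exact Nat.one_le_iff_ne_zero.mpr (by positivity)
    · omega
    · rw [show m * (1 + pc) = m * 1 + m * pc from by ring, Nat.add_mul_mod_self_right]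
  exact ⟨rfl, le_antisymm (hb.2.2.2 pc hc.1 h2) (hc.2.2.2 pb hb.1 h1)⟩

end Aux

theorem monogenic_submonoid_iso_iff_threshold_period_eq
    {M : Type*} [Monoid M] [Finite M] (a b : M) (ta pa tb pb : ℕ)
    (ha : IsThresholdPeriod a ta pa) (hb : IsThresholdPeriod b tb pb) :
    Nonempty ((Submonoid.closure {a} : Submonoid M) ≃* (Submonoid.closure {b} : Submonoid M)) ↔
      ta = tb ∧ pa = pb := by
  constructor
  · rintro ⟨φ⟩
    have ha' : a ∈ Submonoid.closure ({a} : Set M) :=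
      Submonoid.mem_closure_singleton.mpr ⟨1, pow_one a⟩
    have hb' : b ∈ Submonoid.closure ({b} : Set M) :=
      Submonoid.mem_closure_singleton.mpr ⟨1, pow_one b⟩
    set c : M := (φ ⟨a, ha'⟩ : M) with hc_def
    have hcpow : ∀ n : ℕ, ((φ ⟨a, ha'⟩ ^ n : Submonoid.closure ({b} : Set M)) : M) = c ^ n :=
      fun n => by rw [SubmonoidClass.coe_pow]
    have hiff : ∀ k l : ℕ, a ^ k = a ^ l ↔ c ^ k = c ^ l := by
      intro k l
      constructor
      · intro h
        have h1 : (⟨a, ha'⟩ : Submonoid.closure ({a} : Set M)) ^ k = ⟨a, ha'⟩ ^ l :=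
          Subtype.ext (by simpa [SubmonoidClass.coe_pow] using h)
        have h2 := congrArg φ h1
        rw [map_pow, map_pow] at h2
        simpa [SubmonoidClass.coe_pow] using congrArg
          (Subtype.val : Submonoid.closure ({b} : Set M) → M) h2
      · intro h
        have h1 : φ ⟨a, ha'⟩ ^ k = φ ⟨a, ha'⟩ ^ l :=
          Subtype.ext (by simpa [SubmonoidClass.coe_pow] using h)
        rw [← map_pow, ← map_pow] at h1
        have h2 := congrArg φ.symm h1
        rw [MulEquiv.symm_apply_apply, MulEquiv.symm_apply_apply] at h2
        simpa [SubmonoidClass.coe_pow] using congrArg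
          (Subtype.val : Submonoid.closure ({a} : Set M) → M) h2
    have hc_itp : IsThresholdPeriod c ta pa := by
      obtain ⟨h1, h2, h3, h4⟩ := ha
      exact ⟨h1, (hiff _ _).mp h2,
        fun t' p' hp' he => h3 t' p' hp' ((hiff _ _).mpr he),
        fun p' hp' he => h4 p' hp' ((hiff _ _).mpr he)⟩
    obtain ⟨k, hk⟩ : ∃ k : ℕ, b ^ k = c :=
      Submonoid.mem_closure_singleton.mp (φ ⟨a, ha'⟩).2
    obtain ⟨m, hm⟩ : ∃ m : ℕ, a ^ m = ((φ.symm ⟨b, hb'⟩ : Submonoid.closure ({a} : Set M)) : M) :=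
      Submonoid.mem_closure_singleton.mp (φ.symm ⟨b, hb'⟩).2
    have hcm : c ^ m = b := by
      have h1 : (⟨a, ha'⟩ : Submonoid.closure ({a} : Set M)) ^ m = φ.symm ⟨b, hb'⟩ :=
        Subtype.ext (by simpa [SubmonoidClass.coe_pow] using hm)
      have h2 := congrArg φ h1
      rw [map_pow, MulEquiv.apply_symm_apply] at h2
      simpa [SubmonoidClass.coe_pow] using congrArg
        (Subtype.val : Submonoid.closure ({b} : Set M) → M) h2
    have := tp_eq k m hb hc_itp hk hcm
    exact ⟨this.1.symm, this.2.symm⟩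
  · rintro ⟨rfl, rfl⟩
    have transfer : ∀ k l : ℕ, a ^ k = a ^ l → b ^ k = b ^ l := by
      intro k l h
      by_cases hkl : k = l
      · rw [hkl]
      · obtain ⟨h1, h2, h3⟩ := cond_of_pow_eq ha h hkl
        exact pow_eq_of_cond hb.2.1 h1 h2 h3
    have transfer' : ∀ k l : ℕ, b ^ k = b ^ l → a ^ k = a ^ l := by
      intro k l h
      by_cases hkl : k = l
      · rw [hkl]
      · obtain ⟨h1, h2, h3⟩ := cond_of_pow_eq hb h hkl
        exact pow_eq_of_cond ha.2.1 h1 h2 h3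
    have memb : ∀ n : ℕ, b ^ n ∈ Submonoid.closure ({b} : Set M) :=
      fun n => Submonoid.mem_closure_singleton.mpr ⟨n, rfl⟩
    have mema : ∀ n : ℕ, a ^ n ∈ Submonoid.closure ({a} : Set M) :=
      fun n => Submonoid.mem_closure_singleton.mpr ⟨n, rfl⟩
    have exA : ∀ x : Submonoid.closure ({a} : Set M), ∃ n : ℕ, a ^ n = (x : M) :=
      fun x => Submonoid.mem_closure_singleton.mp x.2
    have exB : ∀ x : Submonoid.closure ({b} : Set M), ∃ n : ℕ, b ^ n = (x : M) :=
      fun x => Submonoid.mem_closure_singleton.mp x.2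
    classical
    refine ⟨⟨⟨fun x => ⟨b ^ (exA x).choose, memb _⟩,
      fun y => ⟨a ^ (exB y).choose, mema _⟩, ?_, ?_⟩, ?_⟩⟩
    · intro x
      apply Subtype.ext
      show a ^ _ = (x : M)
      have h1 : b ^ (exB ⟨b ^ (exA x).choose, memb _⟩).choose = b ^ (exA x).choose :=
        (exB ⟨b ^ (exA x).choose, memb _⟩).choose_spec
      rw [transfer' _ _ h1]
      exact (exA x).choose_spec
    · intro y
      apply Subtype.ext
      show b ^ _ = (y : M)
      have h1 : a ^ (exA ⟨a ^ (exB y).choose, mema _⟩).choose = a ^ (exB y).choose :=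
        (exA ⟨a ^ (exB y).choose, mema _⟩).choose_spec
      rw [transfer _ _ h1]
      exact (exB y).choose_spec
    · intro x y
      apply Subtype.ext
      show b ^ _ = b ^ _ * b ^ _
      rw [← pow_add]
      apply transfer
      rw [(exA (x * y)).choose_spec, pow_add, (exA x).choose_spec, (exA y).choose_spec]
      rfl
end

section
/- Let m, n ∈ ℕ with 1 ≤ m ≤ n, let p be the order of some element of the symmetric group S_m, and let t ∈ {0,…,n-m}. Then there exists a transformation f ∈ T_n whose threshold is t and whose period is p. -/
/-!
Let `g` act on the first `m` points of `Fin n`, let the next `t` points form a chain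
`m + t - 1 ↦ ⋯ ↦ m ↦ m - 1` falling into the first block, and fix everything else.
After `t` steps every point has left the chain, and from then on the map acts as a power
of `g` or as the identity, so `orderOf g` is the period. The top of the chain needs all
`t` steps: after `t - 1` of them it sits at `m`, outside the permutation block, and
any further step brings it inside, so no smaller threshold is possible.
-/

open Equiv

section Monoid

variable {M : Type*} [Monoid M] {x : M}

theorem pow_add_eq_pow_of_le {s t p : ℕ} (h : x ^ (s + p) = x ^ s) (hst : s ≤ t) :
    x ^ (t + p) = x ^ t := by
  calc x ^ (t + p) = x ^ (t - s) * x ^ (s + p) := by rw [← pow_add]; congr 1; omega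
    _ = x ^ t := by rw [h, pow_sub_mul_pow x hst]

theorem isThresholdPeriod_of_pow_ne {t p : ℕ} (hp : 0 < p) (heq : x ^ (t + p) = x ^ t)
    (hthreshold : ∀ s, s + 1 = t → ∀ k, 0 < k → x ^ (s + k) ≠ x ^ s)
    (hperiod : ∀ k, 0 < k → x ^ (t + k) = x ^ t → p ≤ k) :
    IsThresholdPeriod x t p := by
  refine ⟨hp, heq, fun t' p' hp' h => ?_, hperiod⟩
  by_contra! hlt
  exact hthreshold (t - 1) (by omega) p' hp' (pow_add_eq_pow_of_le h (by omega))

end Monoid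

/-- Powers in `Function.End α` are iterates by definition, so `ofFun f ^ k` unfolds to `f^[k]`. -/
def Function.End.ofFun {α : Type*} (f : α → α) : Function.End α := f

section PermWithTail

variable {m n : ℕ} (hmn : m ≤ n) (g : Perm (Fin m)) (t : ℕ)

def permWithTail : Fin n → Fin n := fun i =>
  if h : (i : ℕ) < m then Fin.castLE hmn (g ⟨i, h⟩)
  else if (i : ℕ) < m + t then ⟨i - 1, by omega⟩
  else i

local notation "f" => permWithTail hmn g t

theorem semiconj_castLE_permWithTail : Function.Semiconj (Fin.castLE hmn) g f := fun i => by
  simp [permWithTail]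

theorem permWithTail_iterate_castLE (k : ℕ) (i : Fin m) :
    f^[k] (Fin.castLE hmn i) = Fin.castLE hmn ((g ^ k) i) := by
  rw [Perm.coe_pow]
  exact ((semiconj_castLE_permWithTail hmn g t).iterate_right k i).symm

theorem val_permWithTail_of_le_of_lt {x : Fin n} (h₁ : m ≤ x) (h₂ : (x : ℕ) < m + t) :
    (f x : ℕ) = x - 1 := by
  simp [permWithTail, not_lt.mpr h₁, h₂]

theorem permWithTail_of_le {x : Fin n} (h : m + t ≤ x) : f x = x := by
  simp [permWithTail, show ¬ (x : ℕ) < m by omega, show ¬ (x : ℕ) < m + t by omega]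

theorem val_permWithTail_iterate_lt {x : Fin n} (hx : (x : ℕ) < m) (k : ℕ) :
    ((f^[k] x : Fin n) : ℕ) < m := by
  have : x = Fin.castLE hmn ⟨x, hx⟩ := rfl
  rw [this, permWithTail_iterate_castLE]
  exact ((g ^ k) ⟨x, hx⟩).isLt

theorem val_permWithTail_iterate_of_le {x : Fin n} {k : ℕ} (hk : m + k ≤ x)
    (hx : (x : ℕ) < m + t) : ((f^[k] x : Fin n) : ℕ) = x - k := by
  induction k generalizing x with
  | zero => rfl
  | succ k ih =>
    have hfx := val_permWithTail_of_le_of_lt hmn g t (x := x) (by omega) hx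
    rw [Function.iterate_succ_apply, ih (by omega) (by omega), hfx]
    omega

theorem val_permWithTail_iterate_succ_lt (hm : 0 < m) (ht : 0 < t) {x : Fin n}
    (hx : (x : ℕ) ≤ m) (k : ℕ) : ((f^[k + 1] x : Fin n) : ℕ) < m := by
  rw [Function.iterate_succ_apply]
  apply val_permWithTail_iterate_lt
  rcases hx.lt_or_eq with hx | hx
  · simpa using val_permWithTail_iterate_lt hmn g t hx 1
  · rw [val_permWithTail_of_le_of_lt hmn g t hx.ge (by omega)]
    omega

theorem val_permWithTail_iterate_threshold (hm : 0 < m) (x : Fin n) :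
    ((f^[t] x : Fin n) : ℕ) < m ∨ m + t ≤ ((f^[t] x : Fin n) : ℕ) := by
  by_cases hx₁ : (x : ℕ) < m
  · exact .inl (val_permWithTail_iterate_lt hmn g t hx₁ t)
  by_cases hx₂ : (x : ℕ) < m + t
  · left
    obtain ⟨k, hk⟩ : ∃ k, t = (x - m) + (k + 1) := ⟨t - (x - m) - 1, by omega⟩
    have hm' : ((f^[x - m] x : Fin n) : ℕ) = m := by
      rw [val_permWithTail_iterate_of_le hmn g t (by omega) hx₂]
      omega
    have hsplit : f^[t] x = f^[k + 1] (f^[x - m] x) := by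
      rw [← Function.iterate_add_apply]
      congr 1
      omega
    rw [hsplit]
    exact val_permWithTail_iterate_succ_lt hmn g t hm (by omega) hm'.le k
  · rw [Function.iterate_fixed (permWithTail_of_le hmn g t (by omega))]
    exact .inr (by omega)

theorem permWithTail_iterate_orderOf {y : Fin n} (hy : (y : ℕ) < m ∨ m + t ≤ y) :
    f^[orderOf g] y = y := by
  rcases hy with hy | hy
  · have : y = Fin.castLE hmn ⟨y, hy⟩ := rfl
    rw [this, permWithTail_iterate_castLE, pow_orderOf_eq_one, Perm.one_apply]
  · exact Function.iterate_fixed (permWithTail_of_le hmn g t hy) _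

theorem iterate_permWithTail_add_orderOf (hm : 0 < m) : f^[t + orderOf g] = f^[t] := by
  funext x
  rw [add_comm, Function.iterate_add_apply]
  exact permWithTail_iterate_orderOf hmn g t (val_permWithTail_iterate_threshold hmn g t hm x)

theorem iterate_permWithTail_add_ne (hm : 0 < m) (hmt : m + t ≤ n) {s k : ℕ} (hs : s + 1 = t)
    (hk : 0 < k) : f^[s + k] ≠ f^[s] := by
  intro heq
  let top : Fin n := ⟨m + s, by omega⟩
  have hsteps : ((f^[s] top : Fin n) : ℕ) = m := by
    rw [val_permWithTail_iterate_of_le hmn g t le_rfl (show m + s < m + t by omega)]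
    exact Nat.add_sub_cancel m s
  have hbelow : ((f^[k] (f^[s] top) : Fin n) : ℕ) < m := by
    obtain ⟨j, rfl⟩ := Nat.exists_eq_add_one_of_ne_zero hk.ne'
    exact val_permWithTail_iterate_succ_lt hmn g t hm (by omega) hsteps.le j
  rw [← Function.iterate_add_apply, add_comm, heq, hsteps] at hbelow
  exact hbelow.false

theorem pow_eq_one_of_iterate_permWithTail_add_eq {k : ℕ} (h : f^[t + k] = f^[t]) :
    g ^ k = 1 := by
  have hg : g ^ (t + k) = g ^ t := by
    ext i
    have := congrFun h (Fin.castLE hmn i)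
    rw [permWithTail_iterate_castLE, permWithTail_iterate_castLE] at this
    exact congrArg Fin.val (Fin.castLE_injective hmn this)
  rwa [pow_add, mul_eq_left] at hg

theorem isThresholdPeriod_permWithTail (hm : 0 < m) (hmt : m + t ≤ n) :
    IsThresholdPeriod (Function.End.ofFun f) t (orderOf g) :=
  isThresholdPeriod_of_pow_ne (orderOf_pos g) (iterate_permWithTail_add_orderOf hmn g t hm)
    (fun _ hs _ hk => iterate_permWithTail_add_ne hmn g t hm hmt hs hk)
    (fun _ hk h =>
      orderOf_le_of_pow_eq_one hk (pow_eq_one_of_iterate_permWithTail_add_eq hmn g t h))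

end PermWithTail

theorem exists_transformation_with_threshold_period (m n : ℕ) (hm : 1 ≤ m) (hmn : m ≤ n)
    (g : Equiv.Perm (Fin m)) (t : ℕ) (ht : t ≤ n - m) :
    ∃ f : Function.End (Fin n), IsThresholdPeriod f t (orderOf g) :=
  ⟨_, isThresholdPeriod_permWithTail hmn g t hm (by omega)⟩
end

section
/- If f ∈ T_n has threshold t and period p, then p is the order of some permutation in S_{n-t}. -/
open Function Set Equiv

namespace Function

variable {α : Type*} (f : α → α)

theorem range_iterate_succ_subset (k : ℕ) : range f^[k + 1] ⊆ range f^[k] := by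
  rw [iterate_succ]
  exact range_comp_subset_range _ _

theorem mapsTo_range_iterate (k : ℕ) : MapsTo f (range f^[k]) (range f^[k]) := by
  rintro _ ⟨a, rfl⟩
  exact ⟨f a, Commute.iterate_self f k a⟩

variable {f}

theorem surjOn_range_iterate {k : ℕ} (h : range f^[k + 1] = range f^[k]) :
    SurjOn f (range f^[k]) (range f^[k]) := by
  rw [SurjOn, ← range_comp, ← iterate_succ', h]

noncomputable def rangeIteratePerm [Finite α] {k : ℕ} (h : range f^[k + 1] = range f^[k]) :
    Perm (range f^[k]) :=
  BijOn.equiv f <|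
    ((toFinite _).surjOn_iff_bijOn_of_mapsTo (mapsTo_range_iterate f k)).mp
      (surjOn_range_iterate h)

theorem coe_rangeIteratePerm_pow_apply [Finite α] {k : ℕ} (h : range f^[k + 1] = range f^[k])
    (m : ℕ) (x : range f^[k]) : ((rangeIteratePerm h ^ m) x : α) = f^[m] x := by
  rw [Perm.coe_pow]
  exact (mapsTo_range_iterate f k).coe_iterate_restrict x m

theorem rangeIteratePerm_pow_eq_one_iff [Finite α] {k : ℕ} (h : range f^[k + 1] = range f^[k])
    (m : ℕ) : rangeIteratePerm h ^ m = 1 ↔ f^[k + m] = f^[k] := by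
  constructor
  · intro hm
    funext a
    have := coe_rangeIteratePerm_pow_apply h m ⟨f^[k] a, a, rfl⟩
    rwa [hm, Perm.one_apply, eq_comm, ← iterate_add_apply, add_comm] at this
  · intro hm
    ext ⟨_, a, rfl⟩
    rw [coe_rangeIteratePerm_pow_apply, Perm.one_apply, ← iterate_add_apply, add_comm, hm]

theorem range_iterate_succ_eq_iff [Finite α] {k : ℕ} :
    range f^[k + 1] = range f^[k] ↔ ∃ p > 0, f^[k + p] = f^[k] := by
  constructor
  · intro h
    exact ⟨orderOf (rangeIteratePerm h), orderOf_pos _,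
      (rangeIteratePerm_pow_eq_one_iff h _).mp (pow_orderOf_eq_one _)⟩
  · rintro ⟨p, hp, hkp⟩
    refine (range_iterate_succ_subset f k).antisymm ?_
    rw [← hkp, show k + p = k + 1 + (p - 1) by omega, iterate_add]
    exact range_comp_subset_range _ _

theorem ncard_range_iterate_add_le [Finite α] {t : ℕ}
    (ht : ∀ k < t, range f^[k + 1] ≠ range f^[k]) : (range f^[t]).ncard + t ≤ Nat.card α := by
  induction t with
  | zero => simp
  | succ t ih =>
    have hlt : (range f^[t + 1]).ncard < (range f^[t]).ncard :=
      ncard_lt_ncard ((range_iterate_succ_subset f t).ssubset_of_ne (ht t t.lt_succ_self))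
    have := ih fun k hk => ht k (hk.trans t.lt_succ_self)
    omega

end Function

theorem Equiv.Perm.exists_fin_orderOf_eq_of_card_le {α : Type*} [Finite α] {m : ℕ}
    (hα : Nat.card α ≤ m) (σ : Perm α) : ∃ g : Perm (Fin m), orderOf g = orderOf σ := by
  have := Fintype.ofFinite α
  obtain ⟨ι⟩ := Function.Embedding.nonempty_of_card_le (β := Fin m) (by simpa using hα)
  exact ⟨Perm.viaEmbeddingHom ι σ,
    orderOf_injective _ (Perm.viaEmbeddingHom_injective ι) σ⟩

theorem period_is_order_of_perm (n t p : ℕ) (f : Function.End (Fin n))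
    (h : IsThresholdPeriod f t p) :
    ∃ g : Equiv.Perm (Fin (n - t)), orderOf g = p := by
  -- Powers in `Function.End` are iterates by definition, so `h` is read directly as
  -- statements about `f^[m]`.
  obtain ⟨hp, hperiodic, ht_min, hp_min⟩ := h
  have hstable : range f^[t + 1] = range f^[t] := range_iterate_succ_eq_iff.mpr ⟨p, hp, hperiodic⟩
  have horder : orderOf (rangeIteratePerm hstable) = p := by
    refine (orderOf_eq_iff hp).mpr ⟨(rangeIteratePerm_pow_eq_one_iff hstable p).mpr hperiodic,
      fun m hmp hm hσm => ?_⟩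
    exact hmp.not_ge (hp_min m hm ((rangeIteratePerm_pow_eq_one_iff hstable m).mp hσm))
  have hcard : Nat.card (range f^[t]) ≤ n - t := by
    have := ncard_range_iterate_add_le (f := f) fun k hkt hk => by
      obtain ⟨q, hq, hkq⟩ := range_iterate_succ_eq_iff.mp hk
      exact hkt.not_ge (ht_min k q hq hkq)
    rw [Nat.card_fin] at this
    rw [Nat.card_coe_set_eq]
    omega
  obtain ⟨g, hg⟩ := Perm.exists_fin_orderOf_eq_of_card_le hcard (rangeIteratePerm hstable)
  exact ⟨g, hg.trans horder⟩
end

section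
/- Let f, g be chains in the symmetric inverse monoid I_n with |f| ≥ |g|. Then there is a surjective monoid homomorphism from the inverse submonoid of I_n generated by f (and f⁻¹) onto the inverse submonoid generated by g (and g⁻¹). -/
/-!
Read a word in `f` and `f⁻¹` as a `±1` walk on `ℤ`. On the chain `[c 0, …, c m]` a word sends
`c z ↦ c (z + e)`, `e` the endpoint of the walk, for exactly those `z` from which the walk stays
inside `[0, m]`, and a nonempty word moves nothing off the chain. So a nonempty word acts as the
empty map when the spread `max − min` of its walk exceeds `m`, and otherwise its action determines
`(min, max, e)` through the endpoints of its domain and conversely. Hence two words equal in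
`⟨f⟩` are equal in `⟨g⟩` whenever `|g| ≤ |f|`, and evaluation of words from the free monoid on
`{f, f⁻¹}` factors through a surjection `⟨f⟩ → ⟨g⟩`.
-/

/-- The symmetric inverse monoid structure on partial bijections of a set. -/
instance pequivMonoid (α : Type*) : Monoid (PEquiv α α) where
  mul f g := f.trans g
  one := PEquiv.refl α
  mul_assoc := PEquiv.trans_assoc
  one_mul := PEquiv.refl_trans
  mul_one := PEquiv.trans_refl

/-- `f` is a chain of length `m` (i.e. `m` pairs): there are distinct points
`c 0, …, c m` with `f` mapping `c i ↦ c (i+1)` and nothing else. -/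
def IsChainPP {n : ℕ} (f : PEquiv (Fin n) (Fin n)) (m : ℕ) : Prop :=
  ∃ c : Fin (m + 1) → Fin n, Function.Injective c ∧
    ∀ a b : Fin n, f a = some b ↔ ∃ i : Fin m, a = c i.castSucc ∧ b = c i.succ


namespace ChainMonoid

open Function

theorem exists_surjective_of_ker_le {M A B : Type*} [Monoid M] [Monoid A] [Monoid B]
    {p : M →* A} {q : M →* B} (hp : Surjective p) (hq : Surjective q)
    (h : Con.ker p ≤ Con.ker q) : ∃ φ : A →* B, Surjective φ := by
  have hlift : Surjective ((Con.ker p).lift q h) := fun b => by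
    obtain ⟨x, rfl⟩ := hq b
    exact ⟨x, Con.lift_coe h x⟩
  exact ⟨((Con.ker p).lift q h).comp (Con.quotientKerEquivOfSurjective p hp).symm.toMonoidHom,
    hlift.comp (Con.quotientKerEquivOfSurjective p hp).symm.surjective⟩

section Walks

def step (b : Bool) : ℤ := if b then 1 else -1

def endHeight : List Bool → ℤ
  | [] => 0
  | b :: l => step b + endHeight l

def minHeight : List Bool → ℤ
  | [] => 0
  | b :: l => min 0 (step b + minHeight l)

def maxHeight : List Bool → ℤ
  | [] => 0
  | b :: l => max 0 (step b + maxHeight l)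

theorem minHeight_nonpos (l : List Bool) : minHeight l ≤ 0 := by
  cases l <;> simp [minHeight]

theorem maxHeight_nonneg (l : List Bool) : 0 ≤ maxHeight l := by
  cases l <;> simp [maxHeight]

theorem minHeight_lt_maxHeight {l : List Bool} (hl : l ≠ []) : minHeight l < maxHeight l := by
  obtain ⟨b, l, rfl⟩ := List.exists_cons_of_ne_nil hl
  have := minHeight_nonpos l
  have := maxHeight_nonneg l
  cases b <;> simp only [minHeight, maxHeight, step] <;> omega

theorem minHeight_le_endHeight (l : List Bool) : minHeight l ≤ endHeight l := by
  induction l with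
  | nil => simp [minHeight, endHeight]
  | cons b l ih => simp only [minHeight, endHeight]; omega

theorem endHeight_le_maxHeight (l : List Bool) : endHeight l ≤ maxHeight l := by
  induction l with
  | nil => simp [maxHeight, endHeight]
  | cons b l ih => simp only [maxHeight, endHeight]; omega

end Walks

section Words

variable {α : Type*}

/-- `true` stands for `f` and `false` for `f⁻¹`; since `f * g` is `f.trans g`, a word acts
letter by letter from the left, like the walk read from the left. -/
def letter (f : PEquiv α α) (b : Bool) : PEquiv α α := if b then f else f.symm

def evalWord (f : PEquiv α α) (l : List Bool) : PEquiv α α := (l.map (letter f)).prod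

theorem evalWord_nil_apply (f : PEquiv α α) (a : α) : evalWord f [] a = some a := rfl

theorem range_letter (f : PEquiv α α) : Set.range (letter f) = {f, f.symm} := by
  rw [Bool.range_eq, Set.pair_comm]
  rfl

def wordHom (f : PEquiv α α) : FreeMonoid Bool →* Submonoid.closure {f, f.symm} :=
  (FreeMonoid.lift (letter f)).codRestrict _ fun w => by
    rw [← range_letter, ← FreeMonoid.mrange_lift]
    exact ⟨w, rfl⟩

theorem wordHom_surjective (f : PEquiv α α) : Surjective (wordHom f) := by
  rintro ⟨y, hy⟩
  rw [← range_letter, ← FreeMonoid.mrange_lift] at hy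
  obtain ⟨w, rfl⟩ := hy
  exact ⟨w, rfl⟩

theorem coe_wordHom (f : PEquiv α α) (w : FreeMonoid Bool) :
    (wordHom f w : PEquiv α α) = evalWord f w.toList :=
  FreeMonoid.lift_apply _ _

theorem evalWord_cons_apply (f : PEquiv α α) (b : Bool) (l : List Bool) (a : α) :
    evalWord f (b :: l) a = (letter f b a).bind (evalWord f l) := rfl

end Words

section Chains

variable {n m : ℕ}

def chainPt (c : Fin (m + 1) → Fin n) (z : ℤ) : Option (Fin n) :=
  if h : 0 ≤ z ∧ z ≤ m then some (c ⟨z.toNat, by omega⟩) else none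

theorem chainPt_eq_some_iff {c : Fin (m + 1) → Fin n} {z : ℤ} {a : Fin n} :
    chainPt c z = some a ↔ ∃ i : Fin (m + 1), (i : ℤ) = z ∧ c i = a := by
  unfold chainPt
  split_ifs with h
  · refine ⟨fun ha => ⟨_, ?_, Option.some_injective _ ha⟩, ?_⟩
    · simp only [Int.ofNat_toNat, sup_eq_left]
      omega
    rintro ⟨i, rfl, rfl⟩
    simp
  · simp only [false_iff, not_exists, not_and]
    omega

theorem bounds_of_chainPt_eq_some {c : Fin (m + 1) → Fin n} {z : ℤ} {a : Fin n}
    (h : chainPt c z = some a) : 0 ≤ z ∧ z ≤ m := by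
  obtain ⟨i, rfl, -⟩ := chainPt_eq_some_iff.1 h
  omega

theorem exists_chainPt_eq_some (c : Fin (m + 1) → Fin n) {z : ℤ} (h0 : 0 ≤ z) (hm : z ≤ m) :
    ∃ a, chainPt c z = some a :=
  ⟨c ⟨z.toNat, by omega⟩,
    chainPt_eq_some_iff.2 ⟨_, by simp only [Int.ofNat_toNat, sup_eq_left]; omega, rfl⟩⟩

theorem eq_of_chainPt_eq_some {c : Fin (m + 1) → Fin n} (hc : Injective c) {z z' : ℤ} {a : Fin n}
    (h : chainPt c z = some a) (h' : chainPt c z' = some a) : z = z' := by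
  obtain ⟨i, rfl, rfl⟩ := chainPt_eq_some_iff.1 h
  obtain ⟨j, rfl, hji⟩ := chainPt_eq_some_iff.1 h'
  rw [hc hji]

/-- `f` is the chain `[c 0, c 1, …, c m]`. -/
structure IsChainOf (f : PEquiv (Fin n) (Fin n)) (c : Fin (m + 1) → Fin n) : Prop where
  injective : Injective c
  apply_eq_some_iff (a b : Fin n) : f a = some b ↔ ∃ i : Fin m, a = c i.castSucc ∧ b = c i.succ

namespace IsChainOf

variable {f : PEquiv (Fin n) (Fin n)} {c : Fin (m + 1) → Fin n}

theorem apply_eq_some_iff_chainPt (hf : IsChainOf f c) {a b : Fin n} :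
    f a = some b ↔ ∃ z, chainPt c z = some a ∧ chainPt c (z + 1) = some b := by
  simp only [hf.apply_eq_some_iff, chainPt_eq_some_iff]
  constructor
  · rintro ⟨i, rfl, rfl⟩
    exact ⟨i, ⟨_, rfl, rfl⟩, ⟨_, by simp, rfl⟩⟩
  · rintro ⟨z, ⟨i, rfl, rfl⟩, ⟨j, hj, rfl⟩⟩
    refine ⟨⟨i, by omega⟩, rfl, congrArg c (Fin.ext ?_)⟩
    simp only [Fin.val_succ]
    omega

theorem apply_of_chainPt (hf : IsChainOf f c) {z : ℤ} {a : Fin n} (ha : chainPt c z = some a) :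
    f a = chainPt c (z + 1) :=
  Option.ext fun b => by
    rw [hf.apply_eq_some_iff_chainPt]
    exact ⟨fun ⟨z', hz', hb⟩ => eq_of_chainPt_eq_some hf.injective hz' ha ▸ hb,
      fun hb => ⟨z, ha, hb⟩⟩

theorem symm_apply_of_chainPt (hf : IsChainOf f c) {z : ℤ} {a : Fin n}
    (ha : chainPt c z = some a) : f.symm a = chainPt c (z - 1) :=
  Option.ext fun b => by
    rw [PEquiv.eq_some_iff, hf.apply_eq_some_iff_chainPt]
    refine ⟨fun ⟨z', hb, hz'⟩ => ?_, fun hb => ⟨z - 1, hb, by simpa using ha⟩⟩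
    rwa [eq_of_chainPt_eq_some hf.injective ha hz', add_sub_cancel_right]

theorem letter_apply (hf : IsChainOf f c) {z : ℤ} {a : Fin n} (ha : chainPt c z = some a)
    (b : Bool) : letter f b a = chainPt c (z + step b) := by
  cases b
  · exact hf.symm_apply_of_chainPt ha
  · exact hf.apply_of_chainPt ha

theorem exists_chainPt_of_letter_apply (hf : IsChainOf f c) {b : Bool} {a a' : Fin n}
    (h : letter f b a = some a') : ∃ z, chainPt c z = some a := by
  cases b
  · obtain ⟨z, -, ha⟩ := hf.apply_eq_some_iff_chainPt.1 ((PEquiv.eq_some_iff _).1 h)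
    exact ⟨_, ha⟩
  · obtain ⟨z, ha, -⟩ := hf.apply_eq_some_iff_chainPt.1 h
    exact ⟨_, ha⟩

theorem evalWord_apply (hf : IsChainOf f c) {z : ℤ} {a : Fin n} (ha : chainPt c z = some a)
    (l : List Bool) : evalWord f l a =
      if 0 ≤ z + minHeight l ∧ z + maxHeight l ≤ m then chainPt c (z + endHeight l) else none := by
  induction l generalizing z a with
  | nil =>
    have := bounds_of_chainPt_eq_some ha
    simp [evalWord_nil_apply, minHeight, maxHeight, endHeight, ha, this]
  | cons b l ih =>
    have hz := bounds_of_chainPt_eq_some ha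
    have := minHeight_nonpos l
    have := maxHeight_nonneg l
    rw [evalWord_cons_apply, hf.letter_apply ha]
    rcases hb : chainPt c (z + step b) with _ | a'
    · have hout : ¬(0 ≤ z + step b ∧ z + step b ≤ m) := fun ⟨h0, hm⟩ => by
        obtain ⟨_, h⟩ := exists_chainPt_eq_some c h0 hm
        simp [hb] at h
      rw [Option.bind_none, if_neg]
      simp only [minHeight, maxHeight]
      omega
    · have := bounds_of_chainPt_eq_some hb
      rw [Option.bind_some, ih hb, endHeight, ← add_assoc]
      refine if_congr ?_ rfl rfl
      simp only [minHeight, maxHeight]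
      omega

theorem evalWord_apply_eq_some_iff (hf : IsChainOf f c) {z : ℤ} {a b : Fin n}
    (ha : chainPt c z = some a) (l : List Bool) : evalWord f l a = some b ↔
      (0 ≤ z + minHeight l ∧ z + maxHeight l ≤ m) ∧ chainPt c (z + endHeight l) = some b := by
  rw [hf.evalWord_apply ha]
  split_ifs with h <;> simp [h]

theorem evalWord_apply_of_forall_ne (hf : IsChainOf f c) {l : List Bool} (hl : l ≠ [])
    {a : Fin n} (ha : ∀ z, chainPt c z ≠ some a) : evalWord f l a = none := by
  obtain ⟨b, l, rfl⟩ := List.exists_cons_of_ne_nil hl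
  rw [evalWord_cons_apply]
  rcases h : letter f b a with _ | a'
  · rfl
  · obtain ⟨z, hz⟩ := hf.exists_chainPt_of_letter_apply h
    exact absurd hz (ha z)

theorem evalWord_apply_eq_none_of_lt (hf : IsChainOf f c) {l : List Bool}
    (hs : m < maxHeight l - minHeight l) (a : Fin n) : evalWord f l a = none := by
  by_cases ha : ∃ z, chainPt c z = some a
  · obtain ⟨z, ha⟩ := ha
    rw [hf.evalWord_apply ha, if_neg (by omega)]
  · refine hf.evalWord_apply_of_forall_ne ?_ (not_exists.1 ha)
    rintro rfl
    simp only [minHeight, maxHeight, sub_zero] at hs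
    omega

theorem evalWord_eq_one_iff (hf : IsChainOf f c) {l : List Bool} : evalWord f l = 1 ↔ l = [] := by
  refine ⟨fun h => ?_, fun h => h ▸ rfl⟩
  by_contra hl
  have hfix {z : ℤ} {a : Fin n} (ha : chainPt c z = some a) :
      0 ≤ z + minHeight l ∧ z + maxHeight l ≤ m :=
    ((hf.evalWord_apply_eq_some_iff ha l).1 (congrArg (fun g => g a) h)).1
  obtain ⟨a, ha⟩ := exists_chainPt_eq_some c (z := 0) le_rfl (by positivity)
  obtain ⟨a', ha'⟩ := exists_chainPt_eq_some c (z := m) (by positivity) le_rfl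
  have := hfix ha
  have := hfix ha'
  have := minHeight_lt_maxHeight hl
  omega

theorem heights_le_of_evalWord_eq (hf : IsChainOf f c) {l l' : List Bool}
    (h : evalWord f l = evalWord f l') (hs : maxHeight l - minHeight l ≤ m) :
    minHeight l ≤ minHeight l' ∧ maxHeight l' ≤ maxHeight l ∧ endHeight l = endHeight l' := by
  have := minHeight_nonpos l
  have := maxHeight_nonneg l
  have := minHeight_le_endHeight l
  have := endHeight_le_maxHeight l
  have window {z : ℤ} (h0 : 0 ≤ z + minHeight l) (hm : z + maxHeight l ≤ m) :
      (0 ≤ z + minHeight l' ∧ z + maxHeight l' ≤ m) ∧ endHeight l = endHeight l' := by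
    obtain ⟨a, ha⟩ := exists_chainPt_eq_some c (z := z) (by omega) (by omega)
    obtain ⟨b, hb⟩ := exists_chainPt_eq_some c (z := z + endHeight l) (by omega) (by omega)
    have hab : evalWord f l a = some b := (hf.evalWord_apply_eq_some_iff ha l).2 ⟨⟨h0, hm⟩, hb⟩
    rw [h, hf.evalWord_apply_eq_some_iff ha] at hab
    have := eq_of_chainPt_eq_some hf.injective hb hab.2
    exact ⟨hab.1, by omega⟩
  have := window (z := -minHeight l) (by omega) (by omega)
  have := window (z := m - maxHeight l) (by omega) (by omega)
  omega

theorem evalWord_eq_evalWord_iff (hf : IsChainOf f c) {l l' : List Bool} (hl : l ≠ [])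
    (hl' : l' ≠ []) : evalWord f l = evalWord f l' ↔
      (m < maxHeight l - minHeight l ∧ m < maxHeight l' - minHeight l') ∨
        (minHeight l = minHeight l' ∧ maxHeight l = maxHeight l' ∧ endHeight l = endHeight l') := by
  constructor
  · intro h
    by_cases hs : maxHeight l - minHeight l ≤ m
    · obtain ⟨h1, h2, h3⟩ := hf.heights_le_of_evalWord_eq h hs
      obtain ⟨h1', h2', -⟩ := hf.heights_le_of_evalWord_eq h.symm (by omega)
      exact Or.inr ⟨by omega, by omega, h3⟩
    · refine Or.inl ⟨by omega, lt_of_not_ge fun hs' => ?_⟩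
      have := hf.heights_le_of_evalWord_eq h.symm hs'
      omega
  · rintro (⟨hs, hs'⟩ | ⟨hmin, hmax, hend⟩)
    · exact PEquiv.ext fun a => by
        rw [hf.evalWord_apply_eq_none_of_lt hs, hf.evalWord_apply_eq_none_of_lt hs']
    · refine PEquiv.ext fun a => ?_
      by_cases ha : ∃ z, chainPt c z = some a
      · obtain ⟨z, ha⟩ := ha
        rw [hf.evalWord_apply ha, hf.evalWord_apply ha, hmin, hmax, hend]
      · rw [hf.evalWord_apply_of_forall_ne hl (not_exists.1 ha),
          hf.evalWord_apply_of_forall_ne hl' (not_exists.1 ha)]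

end IsChainOf

theorem evalWord_eq_of_evalWord_eq {mf mg : ℕ} {f g : PEquiv (Fin n) (Fin n)}
    (hf : IsChainPP f mf) (hg : IsChainPP g mg) (hm : mg ≤ mf) {l l' : List Bool}
    (h : evalWord f l = evalWord f l') : evalWord g l = evalWord g l' := by
  obtain ⟨cf, hcf, hff⟩ := hf
  obtain ⟨cg, hcg, hgg⟩ := hg
  have hf : IsChainOf f cf := ⟨hcf, hff⟩
  have hg : IsChainOf g cg := ⟨hcg, hgg⟩
  rcases eq_or_ne l [] with rfl | hl
  · rw [hf.evalWord_eq_one_iff.1 h.symm]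
  have hl' : l' ≠ [] := by
    rintro rfl
    exact hl (hf.evalWord_eq_one_iff.1 h)
  rw [hg.evalWord_eq_evalWord_iff hl hl']
  rcases (hf.evalWord_eq_evalWord_iff hl hl').1 h with ⟨hs, hs'⟩ | heq
  · exact Or.inl ⟨by omega, by omega⟩
  · exact Or.inr heq

end Chains

end ChainMonoid

open ChainMonoid

theorem chain_surjective_hom (n mf mg : ℕ) (f g : PEquiv (Fin n) (Fin n))
    (hf : IsChainPP f mf) (hg : IsChainPP g mg) (h : mg ≤ mf) :
    ∃ φ : (Submonoid.closure {f, f.symm} : Submonoid (PEquiv (Fin n) (Fin n))) →*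
        (Submonoid.closure {g, g.symm} : Submonoid (PEquiv (Fin n) (Fin n))),
      Function.Surjective φ := by
  refine exists_surjective_of_ker_le (wordHom_surjective f) (wordHom_surjective g) fun w w' hw => ?_
  rw [Con.ker_rel] at hw ⊢
  apply Subtype.ext
  rw [coe_wordHom, coe_wordHom]
  refine evalWord_eq_of_evalWord_eq hf hg h ?_
  rw [← coe_wordHom, ← coe_wordHom, hw]
end

section
/- Let S_{n,k} be the inverse monoid with presentation ⟨x | x^n x^{-n} = x^{n+1} x^{-(n+1)}, x^n x^{-n} = x^n x^{-n} x^k⟩ (n ≥ 0, k ≥ 1). Then every element of S_{n,k} is represented by a word of the form x^{-a} x^b x^{-b} x^c with 0 ≤ a, c ≤ b < n, or x^{-a} x^n x^{-n} x^c with 0 ≤ a, c < k. In particular S_{n,k} is finite. -/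
section Abstract
variable {M : Type*} [Monoid M]

structure SnkAx (x y : M) (n k : ℕ) : Prop where
  hk : 1 ≤ k
  pow1 : ∀ p, x ^ p * y ^ p * x ^ p = x ^ p
  pow2 : ∀ p, y ^ p * x ^ p * y ^ p = y ^ p
  comm2 : ∀ p q, x ^ p * y ^ p * (y ^ q * x ^ q) = y ^ q * x ^ q * (x ^ p * y ^ p)
  rel1 : x ^ n * y ^ n = x ^ (n + 1) * y ^ (n + 1)
  rel2 : x ^ n * y ^ n * x ^ k = x ^ n * y ^ n

namespace SnkAx
variable {x y : M} {n k : ℕ} (h : SnkAx x y n k)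
include h

/-- `e_m = e_n` for `m ≥ n`. -/
lemma em : ∀ m, n ≤ m → x ^ m * y ^ m = x ^ n * y ^ n := by
  intro m hm
  induction m, hm using Nat.le_induction with
  | base => rfl
  | succ m hm ih =>
    calc x ^ (m + 1) * y ^ (m + 1) = x * (x ^ m * y ^ m) * y := by
          rw [pow_succ', pow_succ]; simp only [mul_assoc]
      _ = x * (x ^ n * y ^ n) * y := by rw [ih]
      _ = x ^ (n + 1) * y ^ (n + 1) := by
          rw [pow_succ', pow_succ]; simp only [mul_assoc]
      _ = x ^ n * y ^ n := h.rel1.symm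

/-- `e_b e_c = e_b` for `c ≤ b`. -/
lemma eid {b c : ℕ} (hcb : c ≤ b) :
    x ^ b * y ^ b * (x ^ c * y ^ c) = x ^ b * y ^ b := by
  obtain ⟨d, rfl⟩ : ∃ d, b = d + c := ⟨b - c, (Nat.sub_add_cancel hcb).symm⟩
  calc x ^ (d + c) * y ^ (d + c) * (x ^ c * y ^ c)
      = x ^ (d + c) * y ^ d * (y ^ c * x ^ c * y ^ c) := by
        rw [pow_add y d c]; simp only [mul_assoc]
    _ = x ^ (d + c) * y ^ d * y ^ c := by rw [h.pow2]
    _ = x ^ (d + c) * y ^ (d + c) := by rw [pow_add y d c, mul_assoc]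

lemma enc (c : ℕ) : x ^ n * y ^ n * (x ^ c * y ^ c) = x ^ n * y ^ n := by
  rcases le_or_gt c n with hcn | hnc
  · exact h.eid hcn
  · rw [h.em c hnc.le]; exact h.eid le_rfl


/-- `x^{c+1} y^{c+1} x^c = x^{c+1} y`. -/
lemma L1 : ∀ c, x ^ (c + 1) * y ^ (c + 1) * x ^ c = x ^ (c + 1) * y := by
  intro c
  induction c with
  | zero => simp
  | succ c ih =>
    calc x ^ (c + 2) * y ^ (c + 2) * x ^ (c + 1)
        = x * ((x ^ (c + 1) * y ^ (c + 1)) * (y ^ 1 * x ^ 1)) * x ^ c := by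
          rw [pow_succ' x (c+1), pow_succ y (c+1), pow_succ' x c, pow_one, pow_one]
          simp only [mul_assoc]
      _ = x * ((y ^ 1 * x ^ 1) * (x ^ (c + 1) * y ^ (c + 1))) * x ^ c := by
          rw [h.comm2]
      _ = (x ^ 1 * y ^ 1 * x ^ 1) * (x ^ (c + 1) * y ^ (c + 1) * x ^ c) := by
          simp only [pow_one, mul_assoc]
      _ = x * (x ^ (c + 1) * y) := by rw [h.pow1, ih, pow_one]
      _ = x ^ (c + 2) * y := by rw [pow_succ' x (c+1), mul_assoc]

/-- `e_n x^{c+1} y = e_n x^c`. -/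
lemma exy (c : ℕ) :
    x ^ n * y ^ n * x ^ (c + 1) * y = x ^ n * y ^ n * x ^ c := by
  calc x ^ n * y ^ n * x ^ (c + 1) * y
      = x ^ n * y ^ n * (x ^ (c + 1) * y) := by simp only [mul_assoc]
    _ = x ^ n * y ^ n * (x ^ (c + 1) * y ^ (c + 1) * x ^ c) := by rw [h.L1]
    _ = x ^ n * y ^ n * (x ^ (c + 1) * y ^ (c + 1)) * x ^ c := by
        simp only [mul_assoc]
    _ = x ^ n * y ^ n * x ^ c := by rw [h.enc]

/-- `e_b x^{c+1} y = e_b x^c` for `c + 1 ≤ b`. -/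
lemma exyb {b c : ℕ} (hcb : c + 1 ≤ b) :
    x ^ b * y ^ b * x ^ (c + 1) * y = x ^ b * y ^ b * x ^ c := by
  calc x ^ b * y ^ b * x ^ (c + 1) * y
      = x ^ b * y ^ b * (x ^ (c + 1) * y) := by simp only [mul_assoc]
    _ = x ^ b * y ^ b * (x ^ (c + 1) * y ^ (c + 1) * x ^ c) := by rw [h.L1]
    _ = x ^ b * y ^ b * (x ^ (c + 1) * y ^ (c + 1)) * x ^ c := by
        simp only [mul_assoc]
    _ = x ^ b * y ^ b * x ^ c := by rw [h.eid hcb]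

/-- `y x^{b+1} y^{b+1} = x^b y^{b+1}`. -/
lemma L3 (b : ℕ) : y * (x ^ (b + 1) * y ^ (b + 1)) = x ^ b * y ^ (b + 1) := by
  calc y * (x ^ (b + 1) * y ^ (b + 1))
      = y ^ 1 * x ^ 1 * (x ^ b * y ^ b) * y ^ 1 := by
        rw [pow_succ' x b, pow_succ y b, pow_one, pow_one]
        simp only [mul_assoc]
    _ = x ^ b * y ^ b * (y ^ 1 * x ^ 1) * y ^ 1 := by rw [← h.comm2]
    _ = x ^ b * y ^ b * (y ^ 1 * x ^ 1 * y ^ 1) := by simp only [mul_assoc]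
    _ = x ^ b * y ^ b * y ^ 1 := by rw [h.pow2]
    _ = x ^ b * y ^ (b + 1) := by rw [pow_one, pow_succ, mul_assoc]

/-- `e_n x^{jk} = e_n`. -/
lemma encxj : ∀ j, x ^ n * y ^ n * x ^ (j * k) = x ^ n * y ^ n := by
  intro j
  induction j with
  | zero => simp
  | succ j ih =>
    calc x ^ n * y ^ n * x ^ ((j + 1) * k)
        = x ^ n * y ^ n * x ^ k * x ^ (j * k) := by
          rw [Nat.succ_mul, Nat.add_comm, pow_add, ← mul_assoc]
      _ = x ^ n * y ^ n := by rw [h.rel2, ih]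

/-- `y^k e_n = e_n`. -/
lemma ykE : y ^ k * (x ^ n * y ^ n) = x ^ n * y ^ n := by
  have hm : n ≤ k * n + k := by
    calc n = 1 * n := (one_mul n).symm
      _ ≤ k * n := Nat.mul_le_mul_right n h.hk
      _ ≤ k * n + k := Nat.le_add_right _ _
  have hm2 : n ≤ k * n := by
    calc n = 1 * n := (one_mul n).symm
      _ ≤ k * n := Nat.mul_le_mul_right n h.hk
  calc y ^ k * (x ^ n * y ^ n)
      = y ^ k * (x ^ (k * n + k) * y ^ (k * n + k)) := by rw [h.em _ hm]
    _ = y ^ k * x ^ k * (x ^ (k * n) * y ^ (k * n)) * y ^ k := by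
        rw [show k * n + k = k + k * n from Nat.add_comm _ _, pow_add x]
        rw [show k + k * n = k * n + k from Nat.add_comm _ _, pow_add y]
        simp only [mul_assoc]
    _ = x ^ (k * n) * y ^ (k * n) * (y ^ k * x ^ k) * y ^ k := by rw [← h.comm2]
    _ = x ^ (k * n) * y ^ (k * n) * (y ^ k * x ^ k * y ^ k) := by
        simp only [mul_assoc]
    _ = x ^ (k * n) * y ^ (k * n) * y ^ k := by rw [h.pow2]
    _ = x ^ n * y ^ n * y ^ k := by rw [h.em _ hm2]
    _ = x ^ n * y ^ n * x ^ k * y ^ k := by rw [h.rel2]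
    _ = x ^ n * y ^ n * (x ^ k * y ^ k) := by rw [mul_assoc]
    _ = x ^ n * y ^ n := h.enc k

/-- `y^{kj} e_n = e_n`. -/
lemma ykjE : ∀ j, y ^ (k * j) * (x ^ n * y ^ n) = x ^ n * y ^ n := by
  intro j
  induction j with
  | zero => simp
  | succ j ih =>
    calc y ^ (k * (j + 1)) * (x ^ n * y ^ n)
        = y ^ (k * j) * (y ^ k * (x ^ n * y ^ n)) := by
          rw [Nat.mul_succ, pow_add, mul_assoc]
      _ = y ^ (k * j) * (x ^ n * y ^ n) := by rw [h.ykE]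
      _ = x ^ n * y ^ n := ih

/-- `y^a e_n = y^{a % k} e_n`. -/
lemma yaE (a : ℕ) : y ^ a * (x ^ n * y ^ n) = y ^ (a % k) * (x ^ n * y ^ n) := by
  conv_lhs => rw [← Nat.mod_add_div a k, pow_add, mul_assoc]
  rw [h.ykjE]

/-- `e_n x^c = e_n x^{c % k}`. -/
lemma enxc (c : ℕ) : x ^ n * y ^ n * x ^ c = x ^ n * y ^ n * x ^ (c % k) := by
  conv_lhs => rw [← Nat.div_add_mod c k, pow_add, ← mul_assoc]
  rw [Nat.mul_comm k (c / k), h.encxj]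


end SnkAx

/-- normal form word value -/
def NFv (x y : M) (a b c : ℕ) : M := y ^ a * x ^ b * (y ^ b * x ^ c)

/-- validity of a normal form triple -/
def Valid (n k a b c : ℕ) : Prop :=
  (a ≤ b ∧ c ≤ b ∧ b < n) ∨ (b = n ∧ a < k ∧ c < k)

namespace SnkAx
variable {x y : M} {n k : ℕ} (h : SnkAx x y n k)
include h

omit h in
lemma nf_mul_x (a b c : ℕ) : NFv x y a b c * x = NFv x y a b (c + 1) := by
  simp only [NFv, pow_succ, mul_assoc]

lemma nf_top (a b : ℕ) : NFv x y a b (b + 1) = NFv x y a (b + 1) (b + 1) := by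
  have h1 : x ^ b * (y ^ b * x ^ (b + 1)) = x ^ (b + 1) := by
    calc x ^ b * (y ^ b * x ^ (b + 1))
        = x ^ b * y ^ b * x ^ b * x := by rw [pow_succ]; simp only [mul_assoc]
      _ = x ^ b * x := by rw [h.pow1]
      _ = x ^ (b + 1) := by rw [pow_succ]
  have h2 : x ^ (b + 1) * (y ^ (b + 1) * x ^ (b + 1)) = x ^ (b + 1) := by
    rw [← mul_assoc]; exact h.pow1 (b + 1)
  simp only [NFv, mul_assoc] at *
  rw [h1, h2]

lemma nf_mod (a c : ℕ) : NFv x y a n c = NFv x y (a % k) n (c % k) := by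
  simp only [NFv]
  calc y ^ a * x ^ n * (y ^ n * x ^ c)
      = y ^ a * (x ^ n * y ^ n) * x ^ c := by simp only [mul_assoc]
    _ = y ^ (a % k) * (x ^ n * y ^ n) * x ^ c := by rw [h.yaE]
    _ = y ^ (a % k) * (x ^ n * y ^ n * x ^ c) := by simp only [mul_assoc]
    _ = y ^ (a % k) * (x ^ n * y ^ n * x ^ (c % k)) := by rw [h.enxc]
    _ = y ^ (a % k) * x ^ n * (y ^ n * x ^ (c % k)) := by simp only [mul_assoc]

lemma nf_coll (a c : ℕ) : NFv x y a (n + 1) c = NFv x y a n c := by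
  simp only [NFv]
  calc y ^ a * x ^ (n + 1) * (y ^ (n + 1) * x ^ c)
      = y ^ a * (x ^ (n + 1) * y ^ (n + 1)) * x ^ c := by simp only [mul_assoc]
    _ = y ^ a * (x ^ n * y ^ n) * x ^ c := by rw [← h.rel1]
    _ = y ^ a * x ^ n * (y ^ n * x ^ c) := by simp only [mul_assoc]

lemma nf_down {b c : ℕ} (hcb : c + 1 ≤ b) (a : ℕ) :
    NFv x y a b (c + 1) * y = NFv x y a b c := by
  simp only [NFv]
  calc y ^ a * x ^ b * (y ^ b * x ^ (c + 1)) * y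
      = y ^ a * (x ^ b * y ^ b * x ^ (c + 1) * y) := by simp only [mul_assoc]
    _ = y ^ a * (x ^ b * y ^ b * x ^ c) := by rw [h.exyb hcb]
    _ = y ^ a * x ^ b * (y ^ b * x ^ c) := by simp only [mul_assoc]

lemma nf_down_n (a c : ℕ) : NFv x y a n (c + 1) * y = NFv x y a n c := by
  simp only [NFv]
  calc y ^ a * x ^ n * (y ^ n * x ^ (c + 1)) * y
      = y ^ a * (x ^ n * y ^ n * x ^ (c + 1) * y) := by simp only [mul_assoc]
    _ = y ^ a * (x ^ n * y ^ n * x ^ c) := by rw [h.exy]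
    _ = y ^ a * x ^ n * (y ^ n * x ^ c) := by simp only [mul_assoc]

lemma nf_up (a b : ℕ) : NFv x y a b 0 * y = NFv x y (a + 1) (b + 1) 0 := by
  simp only [NFv, pow_zero, mul_one]
  calc y ^ a * x ^ b * y ^ b * y
      = y ^ a * (x ^ b * y ^ (b + 1)) := by rw [pow_succ]; simp only [mul_assoc]
    _ = y ^ a * (y * (x ^ (b + 1) * y ^ (b + 1))) := by rw [h.L3]
    _ = y ^ (a + 1) * x ^ (b + 1) * y ^ (b + 1) := by
        rw [pow_succ y a]; simp only [mul_assoc]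

lemma step (a b c : ℕ) (hv : Valid n k a b c) (t : Bool) :
    ∃ a' b' c', NFv x y a b c * (bif t then x else y) = NFv x y a' b' c' ∧
      Valid n k a' b' c' := by
  have hk0 : 0 < k := h.hk
  cases t with
  | true =>
    simp only [cond_true]
    rcases hv with ⟨hab, hcb, hbn⟩ | ⟨hbn, hak, hck⟩
    · rcases lt_or_eq_of_le hcb with hlt | rfl
      · exact ⟨a, b, c + 1, nf_mul_x a b c, Or.inl ⟨hab, hlt, hbn⟩⟩
      · rcases lt_or_eq_of_le (Nat.succ_le_of_lt hbn) with hlt | heq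
        · exact ⟨a, c + 1, c + 1, (nf_mul_x a c c).trans (h.nf_top a c),
            Or.inl ⟨hab.trans (Nat.le_succ c), le_rfl, hlt⟩⟩
        · have heq' : c + 1 = n := heq
          refine ⟨a % k, c + 1, (c + 1) % k, ?_,
            Or.inr ⟨heq', Nat.mod_lt _ hk0, Nat.mod_lt _ hk0⟩⟩
          rw [nf_mul_x a c c, h.nf_top a c, heq']
          exact h.nf_mod a n
    · refine ⟨a, b, (c + 1) % k, ?_, Or.inr ⟨hbn, hak, Nat.mod_lt _ hk0⟩⟩
      rw [nf_mul_x a b c, hbn, h.nf_mod, Nat.mod_eq_of_lt hak]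
  | false =>
    simp only [cond_false]
    rcases hv with ⟨hab, hcb, hbn⟩ | ⟨hbn, hak, hck⟩
    · rcases c with _ | c
      · rcases lt_or_eq_of_le (Nat.succ_le_of_lt hbn) with hlt | heq
        · exact ⟨a + 1, b + 1, 0, h.nf_up a b,
            Or.inl ⟨Nat.succ_le_succ hab, Nat.zero_le _, hlt⟩⟩
        · have heq' : b + 1 = n := heq
          refine ⟨(a + 1) % k, b + 1, 0 % k, ?_,
            Or.inr ⟨heq', Nat.mod_lt _ hk0, Nat.mod_lt _ hk0⟩⟩
          rw [h.nf_up a b, heq']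
          exact h.nf_mod (a + 1) 0
      · exact ⟨a, b, c, h.nf_down hcb a,
          Or.inl ⟨hab, Nat.le_of_succ_le hcb, hbn⟩⟩
    · rcases c with _ | c
      · refine ⟨(a + 1) % k, b, 0 % k, ?_,
          Or.inr ⟨hbn, Nat.mod_lt _ hk0, Nat.mod_lt _ hk0⟩⟩
        rw [h.nf_up a b, hbn, h.nf_coll]
        exact h.nf_mod (a + 1) 0
      · refine ⟨a, b, c, ?_, Or.inr ⟨hbn, hak, Nat.lt_of_succ_lt hck⟩⟩
        rw [hbn]
        exact h.nf_down_n a c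

lemma normal (l : List Bool) :
    ∃ a b c, (l.map (fun t => bif t then x else y)).prod = NFv x y a b c ∧
      Valid n k a b c := by
  induction l using List.reverseRecOn with
  | nil =>
    refine ⟨0, 0, 0, by simp [NFv], ?_⟩
    rcases Nat.eq_zero_or_pos n with hn | hn
    · exact Or.inr ⟨hn.symm, h.hk, h.hk⟩
    · exact Or.inl ⟨le_rfl, le_rfl, hn⟩
  | append_singleton l t ih =>
    obtain ⟨a, b, c, he, hv⟩ := ih
    obtain ⟨a', b', c', he', hv'⟩ := h.step a b c hv t
    refine ⟨a', b', c', ?_, hv'⟩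
    rw [List.map_append, List.prod_append, he, List.map_singleton,
      List.prod_singleton, he']

end SnkAx
end Abstract


/-- Formal inverse of a word over the alphabet {x, x⁻¹} (with \`true\` ↦ x, \`false\` ↦ x⁻¹). -/
def winv (w : FreeMonoid Bool) : FreeMonoid Bool :=
  FreeMonoid.ofList ((FreeMonoid.toList w).reverse.map not)

/-- The generator x. -/
def X : FreeMonoid Bool := FreeMonoid.of true

/-- The formal inverse x⁻¹ of the generator. -/
def Xi : FreeMonoid Bool := FreeMonoid.of false

/-- The Vagner relations: \`w w⁻¹ w = w\` and idempotents \`w w⁻¹\` commute. -/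
def vagner (u v : FreeMonoid Bool) : Prop :=
  (∃ w, u = w * winv w * w ∧ v = w) ∨
    (∃ w z, u = w * winv w * (z * winv z) ∧ v = z * winv z * (w * winv w))


/-- The congruence defining the inverse monoid presentation
\`⟨x | xⁿx⁻ⁿ = xⁿ⁺¹x⁻⁽ⁿ⁺¹⁾, xⁿx⁻ⁿ = xⁿx⁻ⁿxᵏ⟩\`. -/
def snkCon (n k : ℕ) : Con (FreeMonoid Bool) :=
  conGen (fun u v => vagner u v ∨
    (u = X ^ n * Xi ^ n ∧ v = X ^ (n + 1) * Xi ^ (n + 1)) ∨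
    (u = X ^ n * Xi ^ n ∧ v = X ^ n * Xi ^ n * X ^ k))

lemma winv_mul (u v : FreeMonoid Bool) : winv (u * v) = winv v * winv u := by
  simp [winv]

lemma winv_X : winv X = Xi := rfl

lemma winv_Xi : winv Xi = X := rfl

lemma winv_Xpow : ∀ p, winv (X ^ p) = Xi ^ p := by
  intro p
  induction p with
  | zero => rfl
  | succ p ih => rw [pow_succ, winv_mul, ih, winv_X, ← pow_succ']

lemma winv_Xipow : ∀ p, winv (Xi ^ p) = X ^ p := by
  intro p
  induction p with
  | zero => rfl
  | succ p ih => rw [pow_succ, winv_mul, ih, winv_Xi, ← pow_succ']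

lemma snk_rel {n k : ℕ} {u v : FreeMonoid Bool}
    (hr : vagner u v ∨ (u = X ^ n * Xi ^ n ∧ v = X ^ (n + 1) * Xi ^ (n + 1)) ∨
      (u = X ^ n * Xi ^ n ∧ v = X ^ n * Xi ^ n * X ^ k)) :
    (snkCon n k).mk' u = (snkCon n k).mk' v :=
  (Con.eq _).mpr (ConGen.Rel.of u v hr)

lemma snk_ax (n k : ℕ) (hk : 1 ≤ k) :
    SnkAx ((snkCon n k).mk' X) ((snkCon n k).mk' Xi) n k := by
  constructor
  · exact hk
  · intro p
    simp only [← map_pow, ← map_mul]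
    exact snk_rel (Or.inl (Or.inl ⟨X ^ p, by rw [winv_Xpow], rfl⟩))
  · intro p
    simp only [← map_pow, ← map_mul]
    exact snk_rel (Or.inl (Or.inl ⟨Xi ^ p, by rw [winv_Xipow], rfl⟩))
  · intro p q
    simp only [← map_pow, ← map_mul]
    exact snk_rel (Or.inl (Or.inr ⟨X ^ p, Xi ^ q, by rw [winv_Xpow, winv_Xipow],
      by rw [winv_Xpow, winv_Xipow]⟩))
  · simp only [← map_pow, ← map_mul]
    exact snk_rel (Or.inr (Or.inl ⟨rfl, rfl⟩))
  · simp only [← map_pow, ← map_mul]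
    exact (snk_rel (Or.inr (Or.inr ⟨rfl, rfl⟩))).symm

lemma mk_eq_prod (C : Con (FreeMonoid Bool)) (w : FreeMonoid Bool) :
    C.mk' w = ((FreeMonoid.toList w).map
      (fun t => bif t then C.mk' X else C.mk' Xi)).prod := by
  conv_lhs => rw [← FreeMonoid.ofList_toList w]
  generalize FreeMonoid.toList w = l
  induction l with
  | nil =>
    show C.mk' 1 = _
    simp
  | cons t l ih =>
    rw [FreeMonoid.ofList_cons, map_mul, ih, List.map_cons, List.prod_cons]
    cases t
    · rfl
    · rfl

theorem snk_normal_forms (n k : ℕ) (hk : 1 ≤ k) :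
    (∀ s : (snkCon n k).Quotient, ∃ a b c : ℕ,
        s = (snkCon n k).mk' (Xi ^ a * X ^ b * (Xi ^ b * X ^ c)) ∧
          ((a ≤ b ∧ c ≤ b ∧ b < n) ∨ (b = n ∧ a < k ∧ c < k))) ∧
      Finite (snkCon n k).Quotient := by
  have hax := snk_ax n k hk
  have main : ∀ s : (snkCon n k).Quotient, ∃ a b c : ℕ,
      s = (snkCon n k).mk' (Xi ^ a * X ^ b * (Xi ^ b * X ^ c)) ∧
        ((a ≤ b ∧ c ≤ b ∧ b < n) ∨ (b = n ∧ a < k ∧ c < k)) := by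
    intro s
    obtain ⟨w, rfl⟩ := Con.mk'_surjective (c := snkCon n k) s
    obtain ⟨a, b, c, he, hv⟩ := hax.normal (FreeMonoid.toList w)
    refine ⟨a, b, c, ?_, hv⟩
    rw [mk_eq_prod, he]
    simp [NFv, map_mul, map_pow]
  refine ⟨main, ?_⟩
  have hsurj : Function.Surjective
      (fun p : Fin (n + k + 1) × Fin (n + k + 1) × Fin (n + k + 1) =>
        (snkCon n k).mk' (Xi ^ (p.1 : ℕ) * X ^ (p.2.1 : ℕ) *
          (Xi ^ (p.2.1 : ℕ) * X ^ (p.2.2 : ℕ)))) := by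
    intro s
    obtain ⟨a, b, c, hs, hv⟩ := main s
    have ha : a < n + k + 1 := by rcases hv with ⟨h1, _, h3⟩ | ⟨_, h2, _⟩ <;> omega
    have hb : b < n + k + 1 := by rcases hv with ⟨_, _, h3⟩ | ⟨h1, _, _⟩ <;> omega
    have hc : c < n + k + 1 := by rcases hv with ⟨_, h2, h3⟩ | ⟨_, _, h3⟩ <;> omega
    exact ⟨(⟨a, ha⟩, ⟨b, hb⟩, ⟨c, hc⟩), hs.symm⟩
  exact Finite.of_surjective _ hsurj
end

section
/- For n, m ≥ 0 and k, l ≥ 1, the monoids S_{n,k} and S_{m,l} are isomorphic if and only if (n, k) = (m, l), where S_{n,k} is the inverse monoid generated by x_{n,k} = [1,…,n] ∪ (n+1,…,n+k) inside I_{n+k}. -/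
/-- The partial permutation \`[1,…,a] ∪ (a+1,…,a+b)\` of \`{1,…,a+b}\` (0-indexed): the
chain \`i ↦ i + 1\` on \`{0,…,a-1}\` together with the cyclic permutation of \`{a,…,a+b-1}\`. -/
def IsChainCycle {a b : ℕ} (f : PEquiv (Fin (a + b)) (Fin (a + b))) : Prop :=
  ∀ i j : Fin (a + b), f i = some j ↔
    ((i.val + 1 < a ∧ j.val = i.val + 1) ∨
      (a ≤ i.val ∧ 0 < b ∧ j.val = a + ((i.val + 1 - a) % b)))

/-!
Every element of `S_{n,k}` moves a subinterval of the chain by some shift `t` and rotates the cycle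
by some `r`, with `r ≡ t (mod k)` unless the moved interval is empty; conversely every such map is
a product of powers of `x` and `x⁻¹`. Counting these normal forms, `|S_{n,k}| = k + c(n)`, where
`c(n)` counts the pairs of equally long nonempty subintervals of the chain, and `S_{n,k}` has
`1 + e(n)` idempotents, where `e(n)` counts the nonempty subintervals. The number of idempotents is
an isomorphism invariant and strictly increasing in `n`, so it determines `n`; the order then
determines `k`.
-/

lemma Int.eq_emod_iff_dvd_sub {x y k : ℤ} (hx : 0 ≤ x) (hxk : x < k) :
    x = y % k ↔ k ∣ x - y := by
  rw [← dvd_neg, neg_sub, ← Int.modEq_iff_dvd, Int.ModEq, Int.emod_eq_of_lt hx hxk]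

lemma Int.dvd_sub_iff_eq_of_nonneg_of_lt {x y k : ℤ} (hx : 0 ≤ x) (hxk : x < k) (hy : 0 ≤ y)
    (hyk : y < k) : k ∣ x - y ↔ x = y := by
  rw [← Int.eq_emod_iff_dvd_sub hx hxk, Int.emod_eq_of_lt hy hyk]

lemma IsChainCycle.eq {a b : ℕ} {f g : PEquiv (Fin (a + b)) (Fin (a + b))} (hf : IsChainCycle f)
    (hg : IsChainCycle g) : f = g :=
  PEquiv.ext fun i => Option.ext fun j => (hf i j).trans (hg i j).symm

lemma MulEquiv.card_isIdempotentElem_eq {M N : Type*} [Mul M] [Mul N] (e : M ≃* N) :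
    Nat.card {x : M // IsIdempotentElem x} = Nat.card {y : N // IsIdempotentElem y} :=
  Nat.card_congr <| e.toEquiv.subtypeEquiv fun x =>
    ⟨fun h => h.map e, fun h => by simpa using h.map e.symm⟩

lemma PEquiv.symm_pow {α : Type*} (f : PEquiv α α) (m : ℕ) : (f ^ m).symm = f.symm ^ m := by
  induction m with
  | zero => exact PEquiv.symm_refl
  | succ m ih => rw [pow_succ, pow_succ', ← ih]; exact PEquiv.symm_trans_rev _ _

namespace ChainCycle

def Dom (n : ℕ) (a b t i : ℤ) : Prop :=
  a ≤ i ∧ i < b ∧ 0 ≤ i ∧ i < n ∧ 0 ≤ i + t ∧ i + t < n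

instance (n : ℕ) (a b t i : ℤ) : Decidable (Dom n a b t i) := by
  unfold Dom; infer_instance

variable {n k : ℕ}

lemma val_eq_rotate_iff {i j : Fin (n + k)} (hi : n ≤ (i : ℕ)) (r : ℤ) :
    ((j : ℕ) : ℤ) = n + ((i : ℤ) - n + r) % k ↔ n ≤ (j : ℕ) ∧ (k : ℤ) ∣ j - i - r := by
  have hk : (0 : ℤ) < k := by omega
  have := Int.emod_nonneg ((i : ℤ) - n + r) hk.ne'
  have := Int.emod_lt_of_pos ((i : ℤ) - n + r) hk
  have := j.isLt
  rw [show (j : ℤ) - i - r = (j - n) - (i - n + r) by ring]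
  constructor
  · intro h
    exact ⟨by omega, (Int.eq_emod_iff_dvd_sub (by omega) (by omega)).mp (by omega)⟩
  · rintro ⟨hj, h⟩
    have := (Int.eq_emod_iff_dvd_sub (by omega) (by omega)).mpr h
    omega

def shiftRotateFun (n k : ℕ) (a b t r : ℤ) (i : Fin (n + k)) : Option (Fin (n + k)) :=
  if h : Dom n a b t i then some ⟨(i + t).toNat, by unfold Dom at h; omega⟩
  else if hi : n ≤ (i : ℕ) then
    some ⟨n + ((i - n + r) % k).toNat, by
      have := Int.emod_lt_of_pos (i - n + r) (by omega : (0 : ℤ) < k)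
      omega⟩
  else none

lemma shiftRotateFun_eq_some_iff (a b t r : ℤ) (i j : Fin (n + k)) :
    shiftRotateFun n k a b t r i = some j ↔ (Dom n a b t i ∧ (j : ℤ) = i + t) ∨
      (n ≤ (i : ℕ) ∧ n ≤ (j : ℕ) ∧ (k : ℤ) ∣ j - i - r) := by
  unfold shiftRotateFun
  split_ifs with hd hi
  · simp only [Option.some.injEq, Fin.ext_iff]
    unfold Dom at hd ⊢
    omega
  · rw [Option.some.injEq, Fin.ext_iff, Fin.val_mk, or_iff_right fun h => hd h.1, and_iff_right hi,
      ← val_eq_rotate_iff hi]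
    have := Int.emod_nonneg ((i : ℤ) - n + r) (by omega : (k : ℤ) ≠ 0)
    omega
  · simp only [false_iff]
    unfold Dom at hd ⊢
    omega

/-- `shiftRotate n k a b t r` moves each point `i ∈ [a, b)` of the chain `[0, n)` to `i + t`,
provided `i + t` is on the chain as well (`Dom n a b t i`), and rotates the cycle `[n, n + k)` by
`r`. Thus `x_{n,k} = shiftRotate n k 0 n 1 1`. -/
def shiftRotate (n k : ℕ) (a b t r : ℤ) : PEquiv (Fin (n + k)) (Fin (n + k)) where
  toFun := shiftRotateFun n k a b t r
  invFun := shiftRotateFun n k (a + t) (b + t) (-t) (-r)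
  inv i j := by
    have hchain : (Dom n (a + t) (b + t) (-t) j ∧ (i : ℤ) = j + -t) ↔
        (Dom n a b t i ∧ (j : ℤ) = i + t) := by
      unfold Dom; omega
    have hneg : (i : ℤ) - j - -r = -((j : ℤ) - i - r) := by ring
    simp only [shiftRotateFun_eq_some_iff]
    rw [hchain, hneg, dvd_neg, and_left_comm]

variable {a b t r a' b' t' r' : ℤ}

lemma shiftRotate_apply_eq_some_iff {i j : Fin (n + k)} :
    shiftRotate n k a b t r i = some j ↔ (Dom n a b t i ∧ (j : ℤ) = i + t) ∨
      (n ≤ (i : ℕ) ∧ n ≤ (j : ℕ) ∧ (k : ℤ) ∣ j - i - r) :=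
  shiftRotateFun_eq_some_iff a b t r i j

lemma exists_shiftRotate_apply_eq_some {i : Fin (n + k)} (h : Dom n a b t i ∨ n ≤ (i : ℕ)) :
    ∃ j, shiftRotate n k a b t r i = some j := by
  show ∃ j, shiftRotateFun n k a b t r i = some j
  unfold shiftRotateFun
  split_ifs with hd hi
  · exact ⟨_, rfl⟩
  · exact ⟨_, rfl⟩
  · unfold Dom at h hd; omega

lemma shiftRotate_symm :
    (shiftRotate n k a b t r).symm = shiftRotate n k (a + t) (b + t) (-t) (-r) :=
  PEquiv.ext fun _ => rfl

lemma shiftRotate_mul_shiftRotate :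
    shiftRotate n k a b t r * shiftRotate n k a' b' t' r' =
      shiftRotate n k (max a (max a' 0 - t)) (min b (min b' n - t)) (t + t') (r + r') := by
  refine PEquiv.ext fun i => Option.ext fun j => (PEquiv.trans_eq_some _ _ i j).trans ?_
  simp only [shiftRotate_apply_eq_some_iff]
  constructor
  · rintro ⟨m, ⟨hi, hm⟩ | ⟨hi, hm, hdvd⟩, ⟨hm', hj⟩ | ⟨hm', hj, hdvd'⟩⟩
    · left; unfold Dom at *; omega
    · unfold Dom at hi; omega
    · unfold Dom at hm'; omega
    · refine Or.inr ⟨hi, hj, ?_⟩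
      rw [show (j : ℤ) - i - (r + r') = (m - i - r) + (j - m - r') by ring]
      exact dvd_add hdvd hdvd'
  · rintro (hd | ⟨hi, hj, hdvd⟩)
    · have hi : Dom n a b t i := by unfold Dom at *; omega
      obtain ⟨m, hm⟩ := exists_shiftRotate_apply_eq_some (r := r) (Or.inl hi)
      rw [shiftRotate_apply_eq_some_iff] at hm
      refine ⟨m, hm, Or.inl ?_⟩
      unfold Dom at *; omega
    · obtain ⟨m, hm⟩ := exists_shiftRotate_apply_eq_some (a := a) (b := b) (t := t) (r := r)
        (Or.inr hi)
      rw [shiftRotate_apply_eq_some_iff] at hm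
      refine ⟨m, hm, ?_⟩
      rcases hm with ⟨hd, -⟩ | ⟨-, hm, hdvd'⟩
      · unfold Dom at hd; omega
      · refine Or.inr ⟨hm, hj, ?_⟩
        rw [show (j : ℤ) - m - r' = (j - i - (r + r')) - (m - i - r) by ring]
        exact dvd_sub hdvd hdvd'

lemma dom_of_dom_mul {i : ℤ}
    (h : Dom n (max a (max a' 0 - t)) (min b (min b' n - t)) (t + t') i) :
    Dom n a b t i ∧ Dom n a' b' t' (i + t) := by
  unfold Dom at *; omega

lemma shiftRotate_congr (hdom : ∀ i, Dom n a b t i ↔ Dom n a' b' t' i)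
    (ht : ∀ i, Dom n a b t i → t = t') (hr : (k : ℤ) ∣ r - r') :
    shiftRotate n k a b t r = shiftRotate n k a' b' t' r' := by
  refine PEquiv.ext fun i => Option.ext fun j => ?_
  simp only [shiftRotate_apply_eq_some_iff]
  have hchain : (Dom n a b t i ∧ (j : ℤ) = i + t) ↔ (Dom n a' b' t' i ∧ (j : ℤ) = i + t') := by
    constructor
    · rintro ⟨hd, hj⟩; exact ⟨(hdom i).mp hd, by rw [← ht i hd, hj]⟩
    · rintro ⟨hd, hj⟩; exact ⟨(hdom i).mpr hd, by rw [ht i ((hdom i).mpr hd), hj]⟩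
  have hrot : (k : ℤ) ∣ j - i - r ↔ (k : ℤ) ∣ j - i - r' := by
    rw [show (j : ℤ) - i - r = j - i - r' - (r - r') by ring]
    exact dvd_sub_left hr
  rw [hchain, hrot]

lemma dom_and_shift_eq_of_shiftRotate_eq {i : ℤ}
    (h : shiftRotate n k a b t r = shiftRotate n k a' b' t' r') (hi : Dom n a b t i) :
    Dom n a' b' t' i ∧ t = t' := by
  have hi' := hi
  unfold Dom at hi'
  let p : Fin (n + k) := ⟨i.toNat, by omega⟩
  have hp : ((p : ℕ) : ℤ) = i := by simp only [p]; omega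
  obtain ⟨j, hj⟩ := exists_shiftRotate_apply_eq_some (r := r) (i := p) (Or.inl (hp ▸ hi))
  have hj' := hj
  rw [h] at hj'
  rw [shiftRotate_apply_eq_some_iff, hp] at hj hj'
  rcases hj with ⟨-, hj⟩ | ⟨hn, -⟩ <;> rcases hj' with ⟨hd', hj'⟩ | ⟨hn', -⟩
  · exact ⟨hd', by omega⟩
  all_goals omega

lemma dvd_sub_of_shiftRotate_eq (hk : 0 < k)
    (h : shiftRotate n k a b t r = shiftRotate n k a' b' t' r') : (k : ℤ) ∣ r - r' := by
  let p : Fin (n + k) := ⟨n, by omega⟩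
  obtain ⟨j, hj⟩ :=
    exists_shiftRotate_apply_eq_some (a := a) (b := b) (t := t) (r := r) (i := p) (Or.inr le_rfl)
  have hj' := hj
  rw [h] at hj'
  rw [shiftRotate_apply_eq_some_iff] at hj hj'
  rcases hj with ⟨hd, -⟩ | ⟨-, -, hdvd⟩
  · unfold Dom at hd; simp only [p] at hd; omega
  rcases hj' with ⟨hd, -⟩ | ⟨-, -, hdvd'⟩
  · unfold Dom at hd; simp only [p] at hd; omega
  rw [show r - r' = (j - p - r') - (j - p - r) by ring]
  exact dvd_sub hdvd' hdvd

lemma shiftRotate_one : shiftRotate n k 0 n 0 0 = 1 := by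
  refine PEquiv.ext fun i => Option.ext fun j => ?_
  rw [shiftRotate_apply_eq_some_iff]
  show _ ↔ some i = some j
  rw [Option.some.injEq, Fin.ext_iff]
  have := i.isLt
  have := j.isLt
  unfold Dom
  constructor
  · rintro (h | ⟨hi, hj, hdvd⟩)
    · omega
    · rw [show (j : ℤ) - i - 0 = (j - n) - (i - n) by ring,
        Int.dvd_sub_iff_eq_of_nonneg_of_lt (by omega) (by omega) (by omega) (by omega)] at hdvd
      omega
  · intro h
    by_cases hi : n ≤ (i : ℕ)
    · exact Or.inr ⟨hi, by omega, by rw [h]; simp⟩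
    · left; omega

lemma isChainCycle_shiftRotate : IsChainCycle (shiftRotate n k 0 n 1 1) := by
  intro i j
  rw [shiftRotate_apply_eq_some_iff]
  unfold Dom
  refine or_congr (by omega) (and_congr_right fun hi => ?_)
  rw [← val_eq_rotate_iff hi]
  have := i.isLt
  have hmod : (((i + 1 - n) % k : ℕ) : ℤ) = ((i : ℤ) - n + 1) % k := by
    rw [Int.natCast_mod, Nat.cast_sub (by omega)]
    push_cast
    ring_nf
  omega

lemma shiftRotate_pow (m : ℕ) : shiftRotate n k 0 n 1 1 ^ m = shiftRotate n k 0 n m m := by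
  induction m with
  | zero => rw [pow_zero, ← shiftRotate_one]; simp
  | succ m ih =>
    rw [pow_succ, ih, shiftRotate_mul_shiftRotate]
    exact shiftRotate_congr (by unfold Dom; omega) (fun _ _ => by push_cast; ring)
      (by push_cast; simp)

abbrev S (n k : ℕ) : Submonoid (PEquiv (Fin (n + k)) (Fin (n + k))) :=
  Submonoid.closure {shiftRotate n k 0 n 1 1, (shiftRotate n k 0 n 1 1).symm}

lemma shiftRotate_mem_S (s : ℤ) : shiftRotate n k 0 n s s ∈ S n k := by
  obtain ⟨m, rfl | rfl⟩ := Int.eq_nat_or_neg s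
  · rw [← shiftRotate_pow]
    exact pow_mem (Submonoid.subset_closure (.inl rfl)) m
  · have h : shiftRotate n k 0 n (-m) (-m) = (shiftRotate n k 0 n 1 1 ^ m).symm := by
      rw [shiftRotate_pow, shiftRotate_symm]
      exact shiftRotate_congr (by unfold Dom; omega) (fun _ _ => by ring) (by simp)
    rw [h, PEquiv.symm_pow]
    exact pow_mem (Submonoid.subset_closure (.inr rfl)) m

/-- For `0 ≤ a` and `b ≤ n`, `x^(-a) * x^(n - b + a)` is the shift by `n - b` restricted to
`[a, b)`; one more power of `x` turns it into the shift by `t`. -/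
lemma shiftRotate_self_mem_S (a b t : ℤ) : shiftRotate n k a b t t ∈ S n k := by
  set a₀ := max a 0
  set b₀ := min b n
  have h : shiftRotate n k a b t t =
      shiftRotate n k 0 n (-a₀) (-a₀) * shiftRotate n k 0 n (n - b₀ + a₀) (n - b₀ + a₀) *
        shiftRotate n k 0 n (t + b₀ - n) (t + b₀ - n) := by
    rw [shiftRotate_mul_shiftRotate, shiftRotate_mul_shiftRotate]
    exact shiftRotate_congr (by unfold Dom; omega) (fun _ _ => by ring) (by ring_nf; simp)
  rw [h]
  exact mul_mem (mul_mem (shiftRotate_mem_S _) (shiftRotate_mem_S _)) (shiftRotate_mem_S _)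

def compatible (n k : ℕ) : Submonoid (PEquiv (Fin (n + k)) (Fin (n + k))) where
  carrier :=
    {q | ∃ a b t r, (∀ i, Dom n a b t i → (k : ℤ) ∣ r - t) ∧ q = shiftRotate n k a b t r}
  mul_mem' := by
    rintro _ _ ⟨a, b, t, r, h, rfl⟩ ⟨a', b', t', r', h', rfl⟩
    refine ⟨_, _, _, _, fun i hi => ?_, shiftRotate_mul_shiftRotate⟩
    obtain ⟨hi, hi'⟩ := dom_of_dom_mul hi
    rw [show r + r' - (t + t') = (r - t) + (r' - t') by ring]
    exact dvd_add (h i hi) (h' _ hi')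
  one_mem' := ⟨0, n, 0, 0, fun _ _ => by simp, shiftRotate_one.symm⟩

lemma S_eq_compatible (hk : 0 < k) : S n k = compatible n k := by
  refine le_antisymm (Submonoid.closure_le.mpr ?_) ?_
  · rintro _ (rfl | rfl)
    · exact ⟨0, n, 1, 1, fun _ _ => by simp, rfl⟩
    · exact ⟨_, _, _, _, fun _ _ => by simp, shiftRotate_symm⟩
  · rintro _ ⟨a, b, t, r, h, rfl⟩
    by_cases hne : ∃ i, Dom n a b t i
    · obtain ⟨i, hi⟩ := hne
      rw [shiftRotate_congr (fun _ => Iff.rfl) (fun _ _ => rfl) (h i hi)]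
      exact shiftRotate_self_mem_S a b t
    · simp only [not_exists] at hne
      -- a shift by `s ≥ n` has empty chain part
      set s : ℤ := r + k * (n + |r|)
      have hs : n ≤ s := by
        have : (n : ℤ) + |r| ≤ k * (n + |r|) := le_mul_of_one_le_left (by positivity) (by omega)
        have := neg_abs_le r
        omega
      rw [shiftRotate_congr (a' := 0) (b' := n) (t' := s) (r' := s)
        (fun i => ⟨fun hi => absurd hi (hne i), by unfold Dom; omega⟩)
        (fun i hi => absurd hi (hne i)) ⟨-(n + |r|), by ring⟩]
      exact shiftRotate_mem_S s

open Finset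

noncomputable def chainParams (n : ℕ) : Finset (ℤ × ℤ × ℤ) :=
  (Icc 0 (n : ℤ) ×ˢ Icc 0 (n : ℤ) ×ˢ Icc (-n : ℤ) n).filter
    fun x => x.1 < x.2.1 ∧ 0 ≤ x.1 + x.2.2 ∧ x.2.1 + x.2.2 ≤ n

lemma mem_chainParams {x : ℤ × ℤ × ℤ} : x ∈ chainParams n ↔
    0 ≤ x.1 ∧ x.1 < x.2.1 ∧ x.2.1 ≤ n ∧ 0 ≤ x.1 + x.2.2 ∧ x.2.1 + x.2.2 ≤ n := by
  simp only [chainParams, mem_filter, mem_product, mem_Icc]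
  omega

lemma dom_iff_of_mem_chainParams {x : ℤ × ℤ × ℤ} (hx : x ∈ chainParams n) (i : ℤ) :
    Dom n x.1 x.2.1 x.2.2 i ↔ x.1 ≤ i ∧ i < x.2.1 := by
  rw [mem_chainParams] at hx
  unfold Dom
  omega

lemma dom_fst_of_mem_chainParams {x : ℤ × ℤ × ℤ} (hx : x ∈ chainParams n) :
    Dom n x.1 x.2.1 x.2.2 x.1 :=
  (dom_iff_of_mem_chainParams hx x.1).mpr ⟨le_rfl, (mem_chainParams.mp hx).2.1⟩

lemma shiftRotate_ne_of_mem_chainParams {x : ℤ × ℤ × ℤ} (hx : x ∈ chainParams n) (r : ℤ) :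
    shiftRotate n k x.1 x.2.1 x.2.2 x.2.2 ≠ shiftRotate n k 0 0 0 r := fun h => by
  have := (dom_and_shift_eq_of_shiftRotate_eq h (dom_fst_of_mem_chainParams hx)).1
  unfold Dom at this
  omega

lemma chainParams_injOn : Set.InjOn (fun x : ℤ × ℤ × ℤ => shiftRotate n k x.1 x.2.1 x.2.2 x.2.2)
    (chainParams n) := by
  rintro x hx y hy h
  have hxy := dom_and_shift_eq_of_shiftRotate_eq (i := x.1) h
  have hxy' := dom_and_shift_eq_of_shiftRotate_eq (i := x.2.1 - 1) h
  have hyx := dom_and_shift_eq_of_shiftRotate_eq (i := y.1) h.symm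
  have hyx' := dom_and_shift_eq_of_shiftRotate_eq (i := y.2.1 - 1) h.symm
  simp only [dom_iff_of_mem_chainParams hx, dom_iff_of_mem_chainParams hy] at hxy hxy' hyx hyx'
  have := (mem_chainParams.mp hx).2.1
  have := (mem_chainParams.mp hy).2.1
  ext <;> omega

noncomputable def normalForms (n k : ℕ) : Finset (PEquiv (Fin (n + k)) (Fin (n + k))) :=
  (Ico 0 (k : ℤ)).image (fun r => shiftRotate n k 0 0 0 r) ∪
    (chainParams n).image fun x => shiftRotate n k x.1 x.2.1 x.2.2 x.2.2

lemma coe_S_eq_normalForms (hk : 0 < k) :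
    (S n k : Set (PEquiv (Fin (n + k)) (Fin (n + k)))) = normalForms n k := by
  rw [S_eq_compatible hk]
  ext q
  simp only [SetLike.mem_coe, normalForms, coe_union, coe_image, Set.mem_union, Set.mem_image]
  constructor
  · rintro ⟨a, b, t, r, h, rfl⟩
    by_cases hne : ∃ i, Dom n a b t i
    · obtain ⟨i, hi⟩ := hne
      refine Or.inr ⟨(max a (max 0 (-t)), min b (min n (n - t)), t), ?_, ?_⟩
      · rw [mem_chainParams]; dsimp only; unfold Dom at hi; omega
      · dsimp only
        exact shiftRotate_congr (by unfold Dom; omega) (fun _ _ => rfl)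
          (dvd_sub_comm.mp (h i hi))
    · simp only [not_exists] at hne
      have hk' : (0 : ℤ) < k := by omega
      refine Or.inl ⟨r % k, mem_Ico.mpr ⟨Int.emod_nonneg r hk'.ne', Int.emod_lt_of_pos r hk'⟩,
        shiftRotate_congr (fun i => ⟨fun hi => by unfold Dom at hi; omega, (hne i).elim⟩)
          (fun i hi => by unfold Dom at hi; omega) (dvd_sub_comm.mp Int.dvd_self_sub_emod)⟩
  · rintro (⟨r, -, rfl⟩ | ⟨x, -, rfl⟩)
    · exact ⟨0, 0, 0, r, fun i hi => by unfold Dom at hi; omega, rfl⟩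
    · exact ⟨_, _, _, _, fun _ _ => by simp, rfl⟩

lemma card_normalForms (hk : 0 < k) : (normalForms n k).card = k + (chainParams n).card := by
  have hrot : Set.InjOn (fun r => shiftRotate n k 0 0 0 r) (Ico 0 (k : ℤ)) := by
    intro r hr r' hr' h
    rw [coe_Ico, Set.mem_Ico] at hr hr'
    exact (Int.dvd_sub_iff_eq_of_nonneg_of_lt hr.1 hr.2 hr'.1 hr'.2).mp
      (dvd_sub_of_shiftRotate_eq hk h)
  have hdisj : Disjoint ((Ico 0 (k : ℤ)).image fun r => shiftRotate n k 0 0 0 r)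
      ((chainParams n).image fun x => shiftRotate n k x.1 x.2.1 x.2.2 x.2.2) := by
    simp only [disjoint_left, mem_image, not_exists, not_and]
    rintro _ ⟨r, -, rfl⟩ x hx
    exact shiftRotate_ne_of_mem_chainParams hx r
  rw [normalForms, card_union_of_disjoint hdisj, card_image_of_injOn hrot,
    card_image_of_injOn chainParams_injOn, Int.card_Ico, sub_zero, Int.toNat_natCast]

lemma card_S (hk : 0 < k) : Nat.card (S n k) = k + (chainParams n).card := by
  rw [← SetLike.coe_sort_coe, coe_S_eq_normalForms hk, Nat.card_coe_set_eq, Set.ncard_coe_finset,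
    card_normalForms hk]

lemma isIdempotentElem_shiftRotate (a b : ℤ) : IsIdempotentElem (shiftRotate n k a b 0 0) := by
  rw [IsIdempotentElem, shiftRotate_mul_shiftRotate]
  exact shiftRotate_congr (by unfold Dom; omega) (fun _ _ => rfl) (by simp)

lemma shift_eq_zero_of_isIdempotentElem {i : ℤ}
    (h : IsIdempotentElem (shiftRotate n k a b t r)) (hi : Dom n a b t i) : t = 0 := by
  rw [IsIdempotentElem, shiftRotate_mul_shiftRotate] at h
  have := (dom_and_shift_eq_of_shiftRotate_eq h.symm hi).2
  omega

lemma dvd_rotation_of_isIdempotentElem (hk : 0 < k)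
    (h : IsIdempotentElem (shiftRotate n k a b t r)) : (k : ℤ) ∣ r := by
  rw [IsIdempotentElem, shiftRotate_mul_shiftRotate] at h
  simpa using dvd_sub_of_shiftRotate_eq hk h

noncomputable def idemParams (n : ℕ) : Finset (ℤ × ℤ × ℤ) :=
  (chainParams n).filter fun x => x.2.2 = 0

lemma card_idemParams_strictMono : StrictMono fun n => (idemParams n).card := by
  refine strictMono_nat_of_lt_succ fun n => card_lt_card ?_
  rw [ssubset_iff_of_subset]
  · refine ⟨(0, n + 1, 0), ?_, ?_⟩ <;>
      simp only [idemParams, mem_filter, mem_chainParams, and_true] <;> omega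
  · intro x
    simp only [idemParams, mem_filter, mem_chainParams]
    omega

noncomputable def idempotents (n k : ℕ) : Finset (PEquiv (Fin (n + k)) (Fin (n + k))) :=
  insert (shiftRotate n k 0 0 0 0)
    ((idemParams n).image fun x => shiftRotate n k x.1 x.2.1 x.2.2 x.2.2)

lemma setOf_mem_S_isIdempotentElem_eq (hk : 0 < k) :
    {q | q ∈ S n k ∧ IsIdempotentElem q} = (idempotents n k : Set _) := by
  ext q
  rw [Set.mem_ofPred_eq, ← SetLike.mem_coe, coe_S_eq_normalForms hk]
  simp only [normalForms, idempotents, idemParams, coe_union, coe_insert, coe_image, coe_filter,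
    Set.mem_union, Set.mem_insert_iff, Set.mem_image, Set.mem_ofPred_eq, mem_coe]
  constructor
  · rintro ⟨⟨r, hr, rfl⟩ | ⟨x, hx, rfl⟩, hq⟩
    · rw [mem_Ico] at hr
      obtain rfl :=
        Int.eq_zero_of_dvd_of_nonneg_of_lt hr.1 hr.2 (dvd_rotation_of_isIdempotentElem hk hq)
      exact Or.inl rfl
    · exact Or.inr
        ⟨x, ⟨hx, shift_eq_zero_of_isIdempotentElem hq (dom_fst_of_mem_chainParams hx)⟩, rfl⟩
  · rintro (rfl | ⟨x, ⟨hx, ht⟩, rfl⟩)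
    · exact ⟨Or.inl ⟨0, by simpa using hk, rfl⟩, isIdempotentElem_shiftRotate 0 0⟩
    · refine ⟨Or.inr ⟨x, hx, rfl⟩, ?_⟩
      rw [ht]
      exact isIdempotentElem_shiftRotate _ _

lemma card_idempotents : (idempotents n k).card = (idemParams n).card + 1 := by
  rw [idempotents, idemParams, card_insert_of_notMem,
    card_image_of_injOn (chainParams_injOn.mono fun x hx => (mem_filter.mp hx).1)]
  simp only [mem_image, mem_filter, not_exists, not_and]
  rintro x ⟨hx, -⟩
  exact shiftRotate_ne_of_mem_chainParams hx 0

lemma card_isIdempotentElem_S (hk : 0 < k) :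
    Nat.card {q : S n k // IsIdempotentElem q} = (idemParams n).card + 1 := by
  rw [← card_idempotents, ← Set.ncard_coe_finset, ← setOf_mem_S_isIdempotentElem_eq hk,
    ← Nat.card_coe_set_eq]
  have e : {q : S n k // IsIdempotentElem q} ≃
      {q : S n k // IsIdempotentElem (q : PEquiv (Fin (n + k)) (Fin (n + k)))} :=
    Equiv.subtypeEquivRight fun _ => Subtype.ext_iff
  exact Nat.card_congr (e.trans (Equiv.subtypeSubtypeEquivSubtypeInter _ IsIdempotentElem))

end ChainCycle

open ChainCycle in
theorem snk_iso_iff (n m k l : ℕ) (hk : 1 ≤ k) (hl : 1 ≤ l)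
    (f : PEquiv (Fin (n + k)) (Fin (n + k))) (g : PEquiv (Fin (m + l)) (Fin (m + l)))
    (hf : IsChainCycle f) (hg : IsChainCycle g) :
    Nonempty ((Submonoid.closure {f, f.symm} : Submonoid (PEquiv (Fin (n + k)) (Fin (n + k)))) ≃*
        (Submonoid.closure {g, g.symm} : Submonoid (PEquiv (Fin (m + l)) (Fin (m + l))))) ↔
      n = m ∧ k = l := by
  obtain rfl := hf.eq isChainCycle_shiftRotate
  obtain rfl := hg.eq isChainCycle_shiftRotate
  constructor
  · rintro ⟨e⟩
    obtain rfl : n = m := card_idemParams_strictMono.injective <| by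
      simpa [card_isIdempotentElem_S hk, card_isIdempotentElem_S hl] using
        e.card_isIdempotentElem_eq
    have := Nat.card_congr e.toEquiv
    rw [card_S hk, card_S hl] at this
    exact ⟨rfl, by omega⟩
  · rintro ⟨rfl, rfl⟩
    exact ⟨MulEquiv.refl _⟩
end

section
/- Every element of the free monogenic inverse monoid on one generator x can be written in the form x^{-a} x^b x^{-b} x^c for some a, b, c ∈ ℕ with a ≤ b and c ≤ b, and distinct triples (a, b, c) with a, c ≤ b give distinct elements. -/
/-- The free monogenic inverse monoid, as a quotient of the free monoid on {x, x⁻¹}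
by the Vagner congruence. -/
def fimCon : Con (FreeMonoid Bool) := conGen vagner

lemma winv_of (b : Bool) : winv (FreeMonoid.of b) = FreeMonoid.of (!b) := rfl

lemma winv_pow (w : FreeMonoid Bool) (n : ℕ) : winv (w ^ n) = winv w ^ n := by
  induction n with
  | zero => rfl
  | succ n ih => rw [pow_succ, winv_mul, ih, pow_succ']

/-- A Munn tree over the Cayley graph of `G` with respect to one generator; the edge from `g` to
`g + 1` is recorded as `g`. -/
@[ext]
structure MunnTree (G : Type*) where
  edges : Set G
  endpoint : G

namespace MunnTree

open Pointwise

variable {G : Type*}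

section Monoid

variable [AddMonoid G]

instance : One (MunnTree G) := ⟨⟨∅, 0⟩⟩

instance : Mul (MunnTree G) :=
  ⟨fun s t => ⟨s.edges ∪ (s.endpoint +ᵥ t.edges), s.endpoint + t.endpoint⟩⟩

@[simp] lemma one_edges : (1 : MunnTree G).edges = ∅ := rfl
@[simp] lemma one_endpoint : (1 : MunnTree G).endpoint = 0 := rfl
@[simp] lemma mul_edges (s t : MunnTree G) :
    (s * t).edges = s.edges ∪ (s.endpoint +ᵥ t.edges) := rfl
@[simp] lemma mul_endpoint (s t : MunnTree G) :
    (s * t).endpoint = s.endpoint + t.endpoint := rfl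

instance : Monoid (MunnTree G) where
  mul_assoc r s t := by
    ext1
    · simp only [mul_edges, mul_endpoint, Set.vadd_set_union, vadd_vadd, Set.union_assoc]
    · exact add_assoc _ _ _
  one_mul t := by ext1 <;> simp
  mul_one t := by ext1 <;> simp

end Monoid

section Inv

variable [AddGroup G]

instance : Inv (MunnTree G) := ⟨fun t => ⟨-t.endpoint +ᵥ t.edges, -t.endpoint⟩⟩

@[simp] lemma inv_edges (t : MunnTree G) : t⁻¹.edges = -t.endpoint +ᵥ t.edges := rfl
@[simp] lemma inv_endpoint (t : MunnTree G) : t⁻¹.endpoint = -t.endpoint := rfl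

lemma mul_inv_self (t : MunnTree G) : t * t⁻¹ = ⟨t.edges, 0⟩ := by
  ext1 <;> simp [vadd_vadd]

protected lemma mul_inv_rev (s t : MunnTree G) : (s * t)⁻¹ = t⁻¹ * s⁻¹ := by
  ext1
  · simp only [mul_edges, inv_edges, mul_endpoint, inv_endpoint, Set.vadd_set_union, vadd_vadd,
      neg_add_rev, neg_add_cancel_right]
    exact Set.union_comm _ _
  · exact neg_add_rev _ _

lemma mul_inv_mul_self (t : MunnTree G) : t * t⁻¹ * t = t := by
  rw [mul_inv_self]; ext1 <;> simp

lemma commute_mul_inv_self (s t : MunnTree G) : Commute (s * s⁻¹) (t * t⁻¹) := by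
  simp only [Commute, SemiconjBy, mul_inv_self]
  ext1 <;> simp [Set.union_comm]

end Inv

end MunnTree

def toMunnTree : FreeMonoid Bool →* MunnTree ℤ :=
  FreeMonoid.lift fun b => if b then ⟨{0}, 1⟩ else ⟨{-1}, -1⟩

lemma toMunnTree_winv (w : FreeMonoid Bool) : toMunnTree (winv w) = (toMunnTree w)⁻¹ := by
  induction w using FreeMonoid.inductionOn' with
  | one => ext1 <;> simp [winv, toMunnTree]
  | of_mul b w ih =>
    have hgen : toMunnTree (FreeMonoid.of (!b)) = (toMunnTree (FreeMonoid.of b))⁻¹ := by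
      cases b <;> ext1 <;> simp [toMunnTree]
    rw [winv_mul, map_mul, ih, winv_of, hgen, map_mul, MunnTree.mul_inv_rev]

lemma fimCon_le_ker_toMunnTree : fimCon ≤ Con.ker toMunnTree := by
  refine Con.conGen_le.mpr ?_
  rintro u v (⟨w, rfl, rfl⟩ | ⟨w, z, rfl, rfl⟩)
  · simp only [Con.ker_rel, map_mul, toMunnTree_winv, MunnTree.mul_inv_mul_self]
  · simpa only [Con.ker_rel, map_mul, toMunnTree_winv] using
      (MunnTree.commute_mul_inv_self (toMunnTree w) (toMunnTree z)).eq

lemma toMunnTree_X_pow (n : ℕ) : toMunnTree (X ^ n) = ⟨Set.Ico 0 n, n⟩ := by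
  induction n with
  | zero => ext1 <;> simp
  | succ n ih =>
    rw [pow_succ, map_mul, ih]
    ext1
    · ext k; simp [X, toMunnTree]
    · simp [X, toMunnTree]

lemma toMunnTree_Xi_pow (n : ℕ) : toMunnTree (Xi ^ n) = ⟨Set.Ico (-n) 0, -n⟩ := by
  induction n with
  | zero => ext1 <;> simp
  | succ n ih =>
    rw [pow_succ, map_mul, ih]
    ext1
    · ext k; simp [Xi, toMunnTree]; omega
    · simp [Xi, toMunnTree]; ring

lemma toMunnTree_normalWord {a b c : ℕ} (hab : a ≤ b) (hcb : c ≤ b) :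
    toMunnTree (Xi ^ a * X ^ b * (Xi ^ b * X ^ c)) = ⟨Set.Ico (-a) (b - a), c - a⟩ := by
  simp only [map_mul, toMunnTree_X_pow, toMunnTree_Xi_pow]
  ext1
  · ext k; simp [Set.mem_vadd_set_iff_neg_vadd_mem]; omega
  · simp; ring

namespace FreeMonogenicInverseMonoid

def gen : fimCon.Quotient := fimCon.mk' X

def genInv : fimCon.Quotient := fimCon.mk' Xi

lemma mk_mul_mk_winv_mul_mk (w : FreeMonoid Bool) :
    fimCon.mk' w * fimCon.mk' (winv w) * fimCon.mk' w = fimCon.mk' w :=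
  fimCon.eq.mpr (ConGen.Rel.of _ _ (Or.inl ⟨w, rfl, rfl⟩))

lemma commute_mk_mul_mk_winv (w z : FreeMonoid Bool) :
    Commute (fimCon.mk' w * fimCon.mk' (winv w)) (fimCon.mk' z * fimCon.mk' (winv z)) :=
  fimCon.eq.mpr (ConGen.Rel.of _ _ (Or.inr ⟨w, z, rfl, rfl⟩))

lemma gen_pow_mul_genInv_pow_mul_gen_pow (n : ℕ) : gen ^ n * genInv ^ n * gen ^ n = gen ^ n := by
  simpa only [gen, genInv, map_pow, winv_pow, winv_X] using mk_mul_mk_winv_mul_mk (X ^ n)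

lemma genInv_mul_gen_mul_genInv : genInv * gen * genInv = genInv :=
  mk_mul_mk_winv_mul_mk Xi

lemma commute_gen_pow_mul_genInv_pow (m n : ℕ) :
    Commute (gen ^ m * genInv ^ m) (genInv ^ n * gen ^ n) := by
  simpa only [gen, genInv, map_pow, winv_pow, winv_X, winv_Xi] using
    commute_mk_mul_mk_winv (X ^ m) (Xi ^ n)

def nf (a b c : ℕ) : fimCon.Quotient := genInv ^ a * gen ^ b * (genInv ^ b * gen ^ c)

lemma mk_normalWord (a b c : ℕ) :
    fimCon.mk' (Xi ^ a * X ^ b * (Xi ^ b * X ^ c)) = nf a b c := by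
  simp only [map_mul, map_pow, nf, gen, genInv]

lemma nf_mul_gen (a b c : ℕ) : nf a b c * gen = nf a b (c + 1) := by
  simp only [nf, pow_succ, mul_assoc]

lemma nf_succ_self (a b : ℕ) : nf a b (b + 1) = nf a (b + 1) (b + 1) := by
  calc nf a b (b + 1) = genInv ^ a * (gen ^ b * genInv ^ b * gen ^ b) * gen := by
        simp only [nf, pow_succ, mul_assoc]
    _ = genInv ^ a * (gen ^ (b + 1) * genInv ^ (b + 1) * gen ^ (b + 1)) := by
        rw [gen_pow_mul_genInv_pow_mul_gen_pow, gen_pow_mul_genInv_pow_mul_gen_pow, pow_succ,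
          mul_assoc]
    _ = nf a (b + 1) (b + 1) := by simp only [nf, mul_assoc]

lemma nf_succ_mul_genInv {a b c : ℕ} (hcb : c < b) : nf a b (c + 1) * genInv = nf a b c := by
  obtain ⟨j, rfl⟩ : ∃ j, b = j + 1 + c := ⟨b - (c + 1), by omega⟩
  have hcomm := (commute_gen_pow_mul_genInv_pow 1 c).symm.eq
  simp only [pow_one] at hcomm
  calc nf a (j + 1 + c) (c + 1) * genInv
      = genInv ^ a * gen ^ (j + 1 + c) * (genInv ^ j * genInv *
          (genInv ^ c * gen ^ c * (gen * genInv))) := by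
        simp only [nf, pow_add, pow_succ, mul_assoc]
    _ = genInv ^ a * gen ^ (j + 1 + c) * (genInv ^ j * (genInv * gen * genInv) *
          (genInv ^ c * gen ^ c)) := by
        rw [hcomm]; simp only [mul_assoc]
    _ = nf a (j + 1 + c) c := by
        rw [genInv_mul_gen_mul_genInv]; simp only [nf, pow_add, pow_one, mul_assoc]

lemma nf_zero_mul_genInv (a b : ℕ) : nf a b 0 * genInv = nf (a + 1) (b + 1) 0 := by
  have hcomm := (commute_gen_pow_mul_genInv_pow b 1).eq
  simp only [pow_one] at hcomm
  calc nf a b 0 * genInv = genInv ^ a * (gen ^ b * genInv ^ b) * (genInv * gen * genInv) := by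
        rw [genInv_mul_gen_mul_genInv]; simp only [nf, pow_zero, mul_one, mul_assoc]
    _ = genInv ^ a * (genInv * gen * (gen ^ b * genInv ^ b)) * genInv := by
        rw [← hcomm]; simp only [mul_assoc]
    _ = nf (a + 1) (b + 1) 0 := by
        rw [nf, pow_succ genInv a, pow_succ' gen b, pow_succ genInv b]
        simp only [pow_zero, mul_one, mul_assoc]

def IsNormalForm (m : fimCon.Quotient) : Prop := ∃ a b c, a ≤ b ∧ c ≤ b ∧ m = nf a b c

lemma isNormalForm_one : IsNormalForm 1 :=
  ⟨0, 0, 0, le_rfl, le_rfl, by simp [nf]⟩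

lemma IsNormalForm.mul_gen {m : fimCon.Quotient} (hm : IsNormalForm m) :
    IsNormalForm (m * gen) := by
  obtain ⟨a, b, c, hab, hcb, rfl⟩ := hm
  rcases hcb.lt_or_eq with hcb | rfl
  · exact ⟨a, b, c + 1, hab, hcb, nf_mul_gen a b c⟩
  · exact ⟨a, c + 1, c + 1, by omega, le_rfl, by rw [nf_mul_gen, nf_succ_self]⟩

lemma IsNormalForm.mul_genInv {m : fimCon.Quotient} (hm : IsNormalForm m) :
    IsNormalForm (m * genInv) := by
  obtain ⟨a, b, c, hab, hcb, rfl⟩ := hm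
  rcases c with _ | c
  · exact ⟨a + 1, b + 1, 0, by omega, by omega, nf_zero_mul_genInv a b⟩
  · exact ⟨a, b, c, hab, by omega, nf_succ_mul_genInv hcb⟩

lemma IsNormalForm.mul_mk {m : fimCon.Quotient} (hm : IsNormalForm m) (w : FreeMonoid Bool) :
    IsNormalForm (m * fimCon.mk' w) := by
  induction w using FreeMonoid.inductionOn' generalizing m with
  | one => simpa using hm
  | of_mul b w ih =>
    rw [map_mul, ← mul_assoc]
    cases b
    exacts [ih hm.mul_genInv, ih hm.mul_gen]

lemma isNormalForm (m : fimCon.Quotient) : IsNormalForm m :=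
  Con.induction_on m fun w => by simpa using isNormalForm_one.mul_mk w

end FreeMonogenicInverseMonoid

open FreeMonogenicInverseMonoid in
theorem free_inverse_monoid_normal_forms :
    (∀ s : fimCon.Quotient, ∃ a b c : ℕ, a ≤ b ∧ c ≤ b ∧
        s = fimCon.mk' (Xi ^ a * X ^ b * (Xi ^ b * X ^ c))) ∧
      ∀ a b c a' b' c' : ℕ, a ≤ b → c ≤ b → a' ≤ b' → c' ≤ b' →
        fimCon.mk' (Xi ^ a * X ^ b * (Xi ^ b * X ^ c)) =
          fimCon.mk' (Xi ^ a' * X ^ b' * (Xi ^ b' * X ^ c')) →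
        a = a' ∧ b = b' ∧ c = c' := by
  refine ⟨fun s => ?_, fun a b c a' b' c' hab hcb hab' hcb' h => ?_⟩
  · obtain ⟨a, b, c, hab, hcb, hs⟩ := isNormalForm s
    exact ⟨a, b, c, hab, hcb, by rw [hs, mk_normalWord]⟩
  · have htree := fimCon_le_ker_toMunnTree (fimCon.eq.mp h)
    rw [Con.ker_rel, toMunnTree_normalWord hab hcb, toMunnTree_normalWord hab' hcb',
      MunnTree.mk.injEq] at htree
    obtain ⟨hedges, hendpoint⟩ := htree
    by_cases hb : b = 0 ∧ b' = 0
    · omega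
    · rw [Set.Ico_eq_Ico_iff (by omega)] at hedges
      omega
end
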